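/- arXiv:1807.04318 — 10 statements merged into one kernel-verified Lean document; each statement's English description precedes it below -/
import Mathlib

section
/- Let M be the 1×2 integer matrix [2r+1, r] for a positive integer r. Then the lattice generated by its columns is ℤ (which has ℓ∞-covering radius 1/2), but the discrepancy min over y ∈ {-1,1}^2 of |M y| equals r + 1. -/
/-- For a positive integer `r`, the 1×2 matrix `[2r+1, r]` generates the
lattice `ℤ` (which has ℓ∞-covering radius `1/2`), but the discrepancy
`min_{y ∈ {-1,1}²} |y₀(2r+1) + y₁ r|` equals `r + 1`. -/
theorem stmt_0 (r : ℕ) (hr : 0 < r) :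
    AddSubgroup.closure ({2 * (r : ℤ) + 1, (r : ℤ)} : Set ℤ) = ⊤ ∧
    (∀ x : ℝ, ∃ k : ℤ, |x - k| ≤ 1 / 2) ∧
    (∃ x : ℝ, ∀ k : ℤ, 1 / 2 ≤ |x - k|) ∧
    IsLeast {v : ℤ | ∃ y : Fin 2 → ℤ, (∀ i, y i = 1 ∨ y i = -1) ∧
        v = |y 0 * (2 * (r : ℤ) + 1) + y 1 * (r : ℤ)|} ((r : ℤ) + 1) := by
  refine ⟨?_, ?_, ?_, ?_⟩
  · rw [eq_top_iff]
    intro x _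
    have ha : (2 * (r : ℤ) + 1) ∈ AddSubgroup.closure ({2 * (r : ℤ) + 1, (r : ℤ)} : Set ℤ) :=
      AddSubgroup.subset_closure (by simp)
    have hb : ((r : ℤ)) ∈ AddSubgroup.closure ({2 * (r : ℤ) + 1, (r : ℤ)} : Set ℤ) :=
      AddSubgroup.subset_closure (by simp)
    have h1 : (1 : ℤ) ∈ AddSubgroup.closure ({2 * (r : ℤ) + 1, (r : ℤ)} : Set ℤ) := by
      have := AddSubgroup.sub_mem _ ha (AddSubgroup.zsmul_mem _ hb 2)
      simpa using this
    have := AddSubgroup.zsmul_mem _ h1 x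
    simpa using this
  · intro x
    exact ⟨round x, (abs_sub_round x).trans (by norm_num)⟩
  · refine ⟨1/2, fun k => ?_⟩
    have hz : (1 : ℤ) ≤ |1 - 2 * k| := Int.one_le_abs (by omega)
    have hz' : (1 : ℝ) ≤ |1 - 2 * (k : ℝ)| := by exact_mod_cast hz
    have he : |(1/2 : ℝ) - k| = |1 - 2 * (k : ℝ)| / 2 := by
      rw [show (1/2 : ℝ) - k = (1 - 2*(k:ℝ))/2 by ring, abs_div]
      norm_num
    rw [he]
    linarith
  · constructor
    · exact ⟨![-1, 1], by intro i; fin_cases i <;> simp, by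
        simp [abs_of_nonpos]; ring_nf; rw [abs_of_nonpos (by linarith [Int.ofNat_nonneg r])]; ring⟩
    · rintro v ⟨y, hy, rfl⟩
      rcases hy 0 with h0 | h0 <;> rcases hy 1 with h1 | h1 <;>
        rw [h0, h1] <;>
        · rw [le_abs]
          omega
end

section
/- Let M be an m×n matrix whose columns lie in a lattice L ⊆ ℝ^m, and let 1 denote the all-ones vector in ℝ^n. Then for any norm ‖·‖_* on ℝ^m, the minimum of ‖M y‖_* over vectors y ∈ ℤ^n all of whose entries are odd equals the distance d_*(M 1, 2L) from M 1 to the lattice 2L. -/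
/-- If `M` is an m×n real matrix and `L` is the lattice generated by its
columns (so the columns lie in `L`), then for any norm `N` on `ℝ^m`, the minimum of
`N (M y)` over integer vectors `y` all of whose entries are odd equals the distance
(in the norm `N`) from `M 𝟏` to the lattice `2L`. -/
theorem stmt_1 (m n : ℕ) (M : Matrix (Fin m) (Fin n) ℝ)
    (N : (Fin m → ℝ) → ℝ)
    (hN_nonneg : ∀ v, 0 ≤ N v)
    (hN_triangle : ∀ v w, N (v + w) ≤ N v + N w)
    (hN_homog : ∀ (a : ℝ) v, N (a • v) = |a| * N v)
    (hN_pos : ∀ v, N v = 0 → v = 0)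
    (L : AddSubgroup (Fin m → ℝ))
    (hL : L = AddSubgroup.closure (Set.range fun j => fun i => M i j)) :
    sInf {d : ℝ | ∃ y : Fin n → ℤ, (∀ j, Odd (y j)) ∧
        d = N (M.mulVec fun j => (y j : ℝ))} =
    sInf {d : ℝ | ∃ l ∈ L, d = N (M.mulVec (fun _ => 1) - 2 • l)} := by
  have key : ∀ z : Fin n → ℤ, M.mulVec (fun j => (z j : ℝ)) =
      ∑ j, z j • (fun i => M i j) := by
    intro z
    funext i
    simp [Matrix.mulVec, dotProduct, Finset.sum_apply, mul_comm]
  have mem1 : ∀ z : Fin n → ℤ, M.mulVec (fun j => (z j : ℝ)) ∈ L := by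
    intro z
    rw [key, hL]
    exact sum_mem fun j _ =>
      AddSubgroup.zsmul_mem _ (AddSubgroup.subset_closure (Set.mem_range_self j)) _
  have mem2 : ∀ l ∈ L, ∃ z : Fin n → ℤ, l = M.mulVec (fun j => (z j : ℝ)) := by
    intro l hl
    rw [hL] at hl
    induction hl using AddSubgroup.closure_induction with
    | mem x hx =>
      obtain ⟨j, rfl⟩ := hx
      refine ⟨Pi.single j 1, ?_⟩
      funext i
      simp [Matrix.mulVec, dotProduct, Pi.single_apply, mul_comm]
    | zero => exact ⟨0, by funext i; simp [Matrix.mulVec, dotProduct]⟩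
    | add a b _ _ pa pb =>
      obtain ⟨za, rfl⟩ := pa
      obtain ⟨zb, rfl⟩ := pb
      refine ⟨za + zb, ?_⟩
      funext i
      simp [Matrix.mulVec, dotProduct, ← Finset.sum_add_distrib, mul_add]
    | neg a _ pa =>
      obtain ⟨za, rfl⟩ := pa
      refine ⟨-za, ?_⟩
      funext i
      simp [Matrix.mulVec, dotProduct, ← Finset.sum_neg_distrib]
  congr 1
  ext d
  simp only [Set.mem_setOf_eq]
  constructor
  · rintro ⟨y, hodd, rfl⟩
    choose k hk using fun j => hodd j
    refine ⟨-(M.mulVec (fun j => (k j : ℝ))), neg_mem (mem1 k), ?_⟩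
    congr 1
    funext i
    simp only [Matrix.mulVec, dotProduct, Pi.sub_apply, Pi.smul_apply,
      Pi.neg_apply]
    rw [smul_neg, sub_neg_eq_add, nsmul_eq_mul, Finset.mul_sum, ← Finset.sum_add_distrib]
    congr 1
    funext j
    rw [hk j]
    push_cast
    ring
  · rintro ⟨l, hl, rfl⟩
    obtain ⟨z, rfl⟩ := mem2 l hl
    refine ⟨fun j => 1 - 2 * z j, fun j => ⟨-(z j), by ring⟩, ?_⟩
    congr 1
    funext i
    simp only [Matrix.mulVec, dotProduct, Pi.sub_apply, Pi.smul_apply]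
    rw [nsmul_eq_mul, Finset.mul_sum, ← Finset.sum_sub_distrib]
    congr 1
    funext j
    push_cast
    ring
end

section
/- Let M be an m×n matrix whose columns lie in a lattice L ⊆ ℝ^m. Then the minimum of ‖M y‖_* over odd integer vectors y is at most 2ρ_*(L), where ρ_*(L) is the covering radius of L in the norm ‖·‖_*. -/
/-- If `M` is an m×n real matrix whose columns lie in (and generate) a
lattice `L`, `N` is a norm on `ℝ^m`, `ρ` is the covering radius of `L` in the norm `N`
(i.e. every point of `span_ℝ L` is within distance `ρ` of `L`), and `M 𝟏 ∈ span_ℝ L`,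
then the minimum of `N (M y)` over odd integer vectors `y` is at most `2ρ`. -/
theorem stmt_2 (m n : ℕ) (M : Matrix (Fin m) (Fin n) ℝ)
    (N : (Fin m → ℝ) → ℝ)
    (hN_nonneg : ∀ v, 0 ≤ N v)
    (hN_triangle : ∀ v w, N (v + w) ≤ N v + N w)
    (hN_homog : ∀ (a : ℝ) v, N (a • v) = |a| * N v)
    (hN_pos : ∀ v, N v = 0 → v = 0)
    (L : AddSubgroup (Fin m → ℝ))
    (hL : L = AddSubgroup.closure (Set.range fun j => fun i => M i j))
    (ρ : ℝ)
    (hρ : ∀ x ∈ Submodule.span ℝ (L : Set (Fin m → ℝ)),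
        sInf {d : ℝ | ∃ l ∈ L, d = N (x - l)} ≤ ρ)
    (hM1 : M.mulVec (fun _ => 1) ∈ Submodule.span ℝ (L : Set (Fin m → ℝ))) :
    sInf {d : ℝ | ∃ y : Fin n → ℤ, (∀ j, Odd (y j)) ∧
        d = N (M.mulVec fun j => (y j : ℝ))} ≤ 2 * ρ := by
  set S := {d : ℝ | ∃ y : Fin n → ℤ, (∀ j, Odd (y j)) ∧
      d = N (M.mulVec fun j => (y j : ℝ))} with hS
  have hSbdd : BddBelow S := ⟨0, fun d hd => by
    obtain ⟨y, _, rfl⟩ := hd; exact hN_nonneg _⟩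
  -- the point x = (1/2) M 1 lies in span ℝ L
  set x : Fin m → ℝ := (1/2 : ℝ) • M.mulVec (fun _ => 1) with hx
  have hxmem : x ∈ Submodule.span ℝ (L : Set (Fin m → ℝ)) :=
    Submodule.smul_mem _ _ hM1
  -- the distance set for x
  set D := {d : ℝ | ∃ l ∈ L, d = N (x - l)} with hD
  have hDne : D.Nonempty := ⟨N (x - 0), 0, L.zero_mem, rfl⟩
  have key : ∀ ε > 0, sInf S ≤ 2 * ρ + ε := by
    intro ε hε
    have h1 : sInf D ≤ ρ := hρ x hxmem
    have h2 : sInf D < ρ + ε / 2 := lt_of_le_of_lt h1 (by linarith)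
    obtain ⟨d, hdD, hdlt⟩ := exists_lt_of_csInf_lt hDne h2
    obtain ⟨l, hlL, rfl⟩ := hdD
    -- l is an integer combination of the columns of M
    have hlspan : l ∈ Submodule.span ℤ (Set.range fun j => fun i => M i j) := by
      have := Submodule.span_int_eq_addSubgroupClosure
        (M := Fin m → ℝ) (Set.range fun j => fun i => M i j)
      rw [hL] at hlL
      rw [← this] at hlL
      exact hlL
    rw [Submodule.mem_span_range_iff_exists_fun] at hlspan
    obtain ⟨z, hz⟩ := hlspan
    -- l = M.mulVec z
    have hlz : l = M.mulVec (fun j => (z j : ℝ)) := by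
      rw [← hz]
      funext i
      simp [Matrix.mulVec, dotProduct, Finset.sum_apply, mul_comm]
    set y : Fin n → ℤ := fun j => 1 - 2 * z j with hy
    have hyodd : ∀ j, Odd (y j) := fun j => ⟨-z j, by simp [hy]; ring⟩
    have hMy : (M.mulVec fun j => ((y j : ℤ) : ℝ)) = (2 : ℝ) • (x - l) := by
      have : (fun j => ((y j : ℤ) : ℝ)) =
          (fun _ => (1 : ℝ)) - (2 : ℝ) • (fun j => (z j : ℝ)) := by
        funext j; simp [hy]
      rw [this, hlz]
      rw [Matrix.mulVec_sub, Matrix.mulVec_smul]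
      rw [hx, smul_sub, smul_smul]
      norm_num
    have hNle : N (M.mulVec fun j => ((y j : ℤ) : ℝ)) < 2 * ρ + ε := by
      rw [hMy, hN_homog]
      rw [abs_of_pos (by norm_num : (0:ℝ) < 2)]
      linarith
    have hmem : N (M.mulVec fun j => ((y j : ℤ) : ℝ)) ∈ S := ⟨y, hyodd, rfl⟩
    exact le_trans (csInf_le hSbdd hmem) (le_of_lt hNle)
  exact le_of_forall_pos_le_add key
end

section
/- If B(ε) denotes the Euclidean ball of radius ε in ℝ^m, L is a lattice whose support-generating vectors all have Euclidean norm at most L and span ℝ^m, and ε ≤ 1/(2L), then B(ε) is contained in the Voronoi cell D = {r ∈ ℝ^m : ‖r‖₂ ≤ ‖r − t‖₂ for all t ∈ L* \ {0}} of the origin in the dual lattice L*. -/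
/-- if the generating set `S` of a lattice `Λ ⊆ ℝ^m` consists of vectors of
Euclidean norm at most `L` spanning `ℝ^m`, and `ε ≤ 1/(2L)`, then the Euclidean ball of
radius `ε` is contained in the Voronoi cell of the origin in the dual lattice `Λ*`:
every `θ` with `‖θ‖ ≤ ε` satisfies `‖θ‖ ≤ ‖θ - t‖` for all nonzero dual vectors `t`. -/
theorem stmt_6 (m : ℕ) (S : Set (EuclideanSpace ℝ (Fin m))) (L : ℝ) (hLpos : 0 < L)
    (hbdd : ∀ s ∈ S, ‖s‖ ≤ L)
    (hspan : Submodule.span ℝ S = ⊤)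
    (Λ : AddSubgroup (EuclideanSpace ℝ (Fin m)))
    (hΛ : Λ = AddSubgroup.closure S)
    (ε : ℝ) (hε : ε ≤ 1 / (2 * L))
    (θ : EuclideanSpace ℝ (Fin m)) (hθ : ‖θ‖ ≤ ε) :
    ∀ t : EuclideanSpace ℝ (Fin m),
      (∀ v ∈ Λ, ∃ k : ℤ, (inner ℝ t v : ℝ) = k) → t ≠ 0 → ‖θ‖ ≤ ‖θ - t‖ := by
  intro t hdual ht
  -- find s ∈ S with ⟨t, s⟩ ≠ 0
  obtain ⟨s, hsS, hs0⟩ : ∃ s ∈ S, (inner ℝ t s : ℝ) ≠ 0 := by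
    by_contra h
    push_neg at h
    apply ht
    have hzero : ∀ v ∈ Submodule.span ℝ S, (inner ℝ t v : ℝ) = 0 := by
      intro v hv
      induction hv using Submodule.span_induction with
      | mem x hx => exact h x hx
      | zero => simp
      | add x y _ _ hx hy => rw [inner_add_right, hx, hy]; ring
      | smul a x _ hx => rw [real_inner_smul_right, hx]; ring
    have : (inner ℝ t t : ℝ) = 0 := hzero t (hspan ▸ Submodule.mem_top)
    exact inner_self_eq_zero.mp this
  have hsΛ : s ∈ Λ := hΛ ▸ AddSubgroup.subset_closure hsS
  obtain ⟨k, hk⟩ := hdual s hsΛ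
  have hk0 : k ≠ 0 := by rintro rfl; simp at hk; exact hs0 hk
  have h1 : (1 : ℝ) ≤ |(inner ℝ t s : ℝ)| := by
    rw [hk]
    exact_mod_cast Int.one_le_abs hk0
  have hCS : |(inner ℝ t s : ℝ)| ≤ ‖t‖ * ‖s‖ := abs_real_inner_le_norm t s
  have hsL : ‖s‖ ≤ L := hbdd s hsS
  have htnorm : 1 / L ≤ ‖t‖ := by
    rw [div_le_iff₀ hLpos]
    calc (1 : ℝ) ≤ ‖t‖ * ‖s‖ := le_trans h1 hCS
    _ ≤ ‖t‖ * L := by gcongr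
  have : ‖t‖ - ‖θ‖ ≤ ‖θ - t‖ := by
    rw [norm_sub_rev]; exact norm_sub_norm_le t θ
  have hεL : ε ≤ 1 / (2 * L) := hε
  have : 1 / (2 * L) ≤ ‖t‖ - ‖θ‖ := by
    have : ‖θ‖ ≤ 1 / (2 * L) := le_trans hθ hε
    have h2 : 1 / L = 1 / (2 * L) + 1 / (2 * L) := by field_simp; ring
    linarith
  linarith [le_trans hθ hε, norm_sub_rev θ t ▸ norm_sub_norm_le t θ]
end

section
/- Let 0 < t < m and for each t-subset S of [m] let e_S denote the corresponding standard basis vector of ℝ^{C(m,t)}. Write S' →_j S if 1 ∈ S', j ∉ S', j ≠ 1, and S = (S' \ {1}) ∪ {j}. Then the set {e_{S'} − e_S + e_T − e_{T'} : S' →_j S and T' →_j T for some j} spans the kernel of the matrix A whose columns are the indicator vectors 1_S of t-subsets of [m]. -/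
private lemma aux_card {m t : ℕ} {z j : Fin m} {S' : Finset (Fin m)} (hc : S'.card = t)
    (hz : z ∈ S') (hj : j ∉ S') : (insert j (S'.erase z)).card = t := by
  have h0 : 0 < t := hc ▸ Finset.card_pos.mpr ⟨z, hz⟩
  rw [Finset.card_insert_of_notMem (fun h => hj (Finset.mem_of_mem_erase h)),
    Finset.card_erase_of_mem hz, hc]
  omega

private lemma aux_ind {m : ℕ} {z j : Fin m} (i : Fin m) {S' : Finset (Fin m)}
    (hz : z ∈ S') (hj : j ∉ S') :
    ((if i ∈ S' then (1:ℝ) else 0) - (if i ∈ insert j (S'.erase z) then 1 else 0))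
      = (if i = z then 1 else 0) - (if i = j then 1 else 0) := by
  have hzj : z ≠ j := fun h => hj (h ▸ hz)
  by_cases h1 : i = z <;> by_cases h2 : i = j <;> by_cases h3 : i ∈ S' <;>
    simp_all [Finset.mem_insert, Finset.mem_erase]

/-- for `0 < t < m`, with `S' →ⱼ S` meaning `1 ∈ S'` (here "1" is
`⟨0,_⟩ : Fin m`), `j ∉ S'`, and `S = (S' \ {1}) ∪ {j}`, the set
`{e_{S'} - e_S + e_T - e_{T'} : S' →ⱼ S and T' →ⱼ T}` spans the kernel of the matrix
`A` whose columns are the indicator vectors of the `t`-subsets of `[m]`. -/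
theorem stmt_11 (m t : ℕ) (ht : 0 < t) (htm : t < m)
    (A : Matrix (Fin m) {S : Finset (Fin m) // S.card = t} ℝ)
    (hA : ∀ i S, A i S = if i ∈ S.1 then 1 else 0)
    (step : Fin m → {S : Finset (Fin m) // S.card = t} →
      {S : Finset (Fin m) // S.card = t} → Prop)
    (hstep : ∀ j S' S, step j S' S ↔
      (⟨0, by omega⟩ : Fin m) ∈ S'.1 ∧ j ∉ S'.1 ∧
        S.1 = insert j (S'.1.erase ⟨0, by omega⟩)) :
    Submodule.span ℝ
      {v : {S : Finset (Fin m) // S.card = t} → ℝ |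
        ∃ j S' S T' T, step j S' S ∧ step j T' T ∧
          v = Pi.single S' 1 - Pi.single S 1 + Pi.single T 1 - Pi.single T' 1} =
    LinearMap.ker A.mulVecLin := by
  classical
  have hm0 : 0 < m := ht.trans htm
  set z : Fin m := ⟨0, hm0⟩ with hzdef
  set Gen : Set ({S : Finset (Fin m) // S.card = t} → ℝ) :=
    {v : {S : Finset (Fin m) // S.card = t} → ℝ |
      ∃ j S' S T' T, step j S' S ∧ step j T' T ∧
        v = Pi.single S' 1 - Pi.single S 1 + Pi.single T 1 - Pi.single T' 1} with hGen
  -- the column of `A` at `S`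
  have hcol : ∀ (S : {S : Finset (Fin m) // S.card = t}),
      A.mulVecLin (Pi.single S 1) = fun i => if i ∈ S.1 then (1:ℝ) else 0 := by
    intro S
    funext i
    simp [Matrix.mulVecLin_apply, Matrix.mulVec_single, hA]
  -- image of a step difference
  have himg : ∀ (j : Fin m) (S' S : {S : Finset (Fin m) // S.card = t}), step j S' S →
      A.mulVecLin (Pi.single S' 1 - Pi.single S 1) = Pi.single z 1 - Pi.single j 1 := by
    intro j S' S hS
    rw [hstep] at hS
    obtain ⟨hzS, hjS, hSeq⟩ := hS
    funext i
    rw [map_sub]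
    simp only [Pi.sub_apply, hcol, hSeq]
    rw [aux_ind i hzS hjS]
    simp [Pi.single_apply]
    rfl
  -- the span of the generators lies in the kernel
  have hker : Submodule.span ℝ Gen ≤ LinearMap.ker A.mulVecLin := by
    rw [Submodule.span_le]
    rintro v ⟨j, S', S, T', T, hS, hT, rfl⟩
    simp only [SetLike.mem_coe, LinearMap.mem_ker]
    have hrw : (Pi.single S' 1 - Pi.single S 1 + Pi.single T 1 - Pi.single T' 1 :
          {S : Finset (Fin m) // S.card = t} → ℝ)
        = (Pi.single S' 1 - Pi.single S 1) - (Pi.single T' 1 - Pi.single T 1) := by abel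
    rw [hrw, map_sub, himg j S' S hS, himg j T' T hT, sub_self]
  -- building steps
  have mkstep : ∀ (j : Fin m) (S' : Finset (Fin m)) (hc : S'.card = t) (hz : z ∈ S')
      (hj : j ∉ S'),
      step j ⟨S', hc⟩ ⟨insert j (S'.erase z), aux_card hc hz hj⟩ := by
    intro j S' hc hz hj
    rw [hstep]
    exact ⟨hz, hj, rfl⟩
  -- generators
  have hgen : ∀ (j : Fin m) (S' T' : Finset (Fin m)) (hcS : S'.card = t) (hcT : T'.card = t)
      (hzS : z ∈ S') (hzT : z ∈ T') (hjS : j ∉ S') (hjT : j ∉ T'),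
      (Pi.single (⟨S', hcS⟩ : {S : Finset (Fin m) // S.card = t}) (1:ℝ)
        - Pi.single ⟨insert j (S'.erase z), aux_card hcS hzS hjS⟩ 1
        + Pi.single ⟨insert j (T'.erase z), aux_card hcT hzT hjT⟩ 1
        - Pi.single ⟨T', hcT⟩ 1) ∈ Submodule.span ℝ Gen := by
    intro j S' T' hcS hcT hzS hzT hjS hjT
    exact Submodule.subset_span
      ⟨j, _, _, _, _, mkstep j S' hcS hzS hjS, mkstep j T' hcT hzT hjT, rfl⟩
  -- the reference sets
  set k0 : Fin m := ⟨t, htm⟩ with hk0def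
  set R : Finset (Fin m) := Finset.Iio k0 with hRdef
  have hzR : z ∈ R := by
    simp only [hRdef, Finset.mem_Iio]
    exact Fin.mk_lt_mk.mpr ht
  have hk0R : k0 ∉ R := by simp [hRdef]
  have hRcard : R.card = t := by
    rw [hRdef]
    simp [hk0def]
  have cardPa : ∀ a, a ∈ R → (insert k0 (R.erase a)).card = t := by
    intro a ha
    rw [Finset.card_insert_of_notMem (fun h => hk0R (Finset.mem_of_mem_erase h)),
      Finset.card_erase_of_mem ha, hRcard]
    omega
  have cardRv : ∀ v, v ∉ R → (insert v (R.erase z)).card = t := fun v hv =>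
    aux_card hRcard hzR hv
  set w : Fin m → ({S : Finset (Fin m) // S.card = t} → ℝ) := fun i =>
    if hi : i ∈ R then
      (if i = z then Pi.single ⟨R, hRcard⟩ 1
        else Pi.single ⟨insert k0 (R.erase i), cardPa i hi⟩ 1)
    else Pi.single ⟨insert i (R.erase z), cardRv i hi⟩ 1 with hwdef
  have hwR : Pi.single (⟨R, hRcard⟩ : {S : Finset (Fin m) // S.card = t}) (1:ℝ)
      ∈ Set.range w := ⟨z, by simp [hwdef, hzR]⟩
  have hwRv : ∀ (v : Fin m) (hv : v ∉ R),
      Pi.single (⟨insert v (R.erase z), cardRv v hv⟩ :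
        {S : Finset (Fin m) // S.card = t}) (1:ℝ) ∈ Set.range w :=
    fun v hv => ⟨v, by simp [hwdef, hv]⟩
  have hwPa : ∀ (a : Fin m) (ha : a ∈ R), a ≠ z →
      Pi.single (⟨insert k0 (R.erase a), cardPa a ha⟩ :
        {S : Finset (Fin m) // S.card = t}) (1:ℝ) ∈ Set.range w :=
    fun a ha haz => ⟨a, by simp [hwdef, ha, haz]⟩
  set U : Submodule ℝ ({S : Finset (Fin m) // S.card = t} → ℝ) :=
    Submodule.span ℝ Gen ⊔ Submodule.span ℝ (Set.range w) with hUdef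
  have hUw : ∀ x ∈ Set.range w, x ∈ U := fun x hx =>
    Submodule.mem_sup_right (Submodule.subset_span hx)
  -- step differences are in U
  have hL2 : ∀ (j : Fin m) (S' : Finset (Fin m)) (hc : S'.card = t) (hz : z ∈ S')
      (hj : j ∉ S'),
      Pi.single (⟨S', hc⟩ : {S : Finset (Fin m) // S.card = t}) (1:ℝ)
        - Pi.single ⟨insert j (S'.erase z), aux_card hc hz hj⟩ 1 ∈ U := by
    intro j S' hc hz hj
    have hjz : j ≠ z := fun h => hj (h ▸ hz)
    by_cases hjR : j ∈ R
    · -- reference step from `insert k0 (R.erase j)`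
      have hzP : z ∈ insert k0 (R.erase j) :=
        Finset.mem_insert_of_mem (Finset.mem_erase.mpr ⟨hjz.symm, hzR⟩)
      have hjP : j ∉ insert k0 (R.erase j) := by
        simp only [Finset.mem_insert, Finset.mem_erase]
        rintro (h | ⟨h1, h2⟩)
        · exact hk0R (h ▸ hjR)
        · exact h1 rfl
      have hg := hgen j S' (insert k0 (R.erase j)) hc (cardPa j hjR) hz hzP hj hjP
      have hEq : insert j ((insert k0 (R.erase j)).erase z) = insert k0 (R.erase z) := by
        have hk0z : k0 ≠ z := fun h => hk0R (h ▸ hzR)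
        ext x
        simp only [Finset.mem_insert, Finset.mem_erase]
        constructor
        · rintro (h | ⟨h1, (h2 | ⟨h3, h4⟩)⟩)
          · exact Or.inr ⟨h ▸ hjz, h ▸ hjR⟩
          · exact Or.inl h2
          · exact Or.inr ⟨h1, h4⟩
        · rintro (h | ⟨h1, h2⟩)
          · exact Or.inr ⟨h ▸ hk0z, Or.inl h⟩
          · by_cases hx : x = j
            · exact Or.inl hx
            · exact Or.inr ⟨h1, Or.inr ⟨hx, h2⟩⟩
      have hTsub : (⟨insert j ((insert k0 (R.erase j)).erase z),
            aux_card (cardPa j hjR) hzP hjP⟩ :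
          {S : Finset (Fin m) // S.card = t}) = ⟨insert k0 (R.erase z), cardRv k0 hk0R⟩ :=
        Subtype.ext hEq
      have hT : Pi.single (⟨insert j ((insert k0 (R.erase j)).erase z),
            aux_card (cardPa j hjR) hzP hjP⟩ :
          {S : Finset (Fin m) // S.card = t}) (1:ℝ) ∈ U := by
        rw [hTsub]; exact hUw _ (hwRv k0 hk0R)
      have hT' : Pi.single (⟨insert k0 (R.erase j), cardPa j hjR⟩ :
          {S : Finset (Fin m) // S.card = t}) (1:ℝ) ∈ U := hUw _ (hwPa j hjR hjz)
      have hgU : (Pi.single (⟨S', hc⟩ : {S : Finset (Fin m) // S.card = t}) (1:ℝ)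
          - Pi.single ⟨insert j (S'.erase z), aux_card hc hz hj⟩ 1
          + Pi.single ⟨insert j ((insert k0 (R.erase j)).erase z),
              aux_card (cardPa j hjR) hzP hjP⟩ 1
          - Pi.single ⟨insert k0 (R.erase j), cardPa j hjR⟩ 1) ∈ U :=
        Submodule.mem_sup_left hg
      have hcomb : (Pi.single (⟨S', hc⟩ : {S : Finset (Fin m) // S.card = t}) 1
          - Pi.single ⟨insert j (S'.erase z), aux_card hc hz hj⟩ 1 :
            {S : Finset (Fin m) // S.card = t} → ℝ)
          = (Pi.single (⟨S', hc⟩ : {S : Finset (Fin m) // S.card = t}) (1:ℝ)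
              - Pi.single ⟨insert j (S'.erase z), aux_card hc hz hj⟩ 1
              + Pi.single ⟨insert j ((insert k0 (R.erase j)).erase z),
                  aux_card (cardPa j hjR) hzP hjP⟩ 1
              - Pi.single ⟨insert k0 (R.erase j), cardPa j hjR⟩ 1)
            - Pi.single ⟨insert j ((insert k0 (R.erase j)).erase z),
                aux_card (cardPa j hjR) hzP hjP⟩ 1
            + Pi.single ⟨insert k0 (R.erase j), cardPa j hjR⟩ 1 := by abel
      rw [hcomb]
      exact Submodule.add_mem _ (Submodule.sub_mem _ hgU hT) hT'
    · -- reference step from `R`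
      have hg := hgen j S' R hc hRcard hz hzR hj hjR
      have hT : Pi.single (⟨insert j (R.erase z), aux_card hRcard hzR hjR⟩ :
          {S : Finset (Fin m) // S.card = t}) (1:ℝ) ∈ U := hUw _ (hwRv j hjR)
      have hT' : Pi.single (⟨R, hRcard⟩ :
          {S : Finset (Fin m) // S.card = t}) (1:ℝ) ∈ U := hUw _ hwR
      have hgU : (Pi.single (⟨S', hc⟩ : {S : Finset (Fin m) // S.card = t}) (1:ℝ)
          - Pi.single ⟨insert j (S'.erase z), aux_card hc hz hj⟩ 1
          + Pi.single ⟨insert j (R.erase z), aux_card hRcard hzR hjR⟩ 1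
          - Pi.single ⟨R, hRcard⟩ 1) ∈ U := Submodule.mem_sup_left hg
      have hcomb : (Pi.single (⟨S', hc⟩ : {S : Finset (Fin m) // S.card = t}) 1
          - Pi.single ⟨insert j (S'.erase z), aux_card hc hz hj⟩ 1 :
            {S : Finset (Fin m) // S.card = t} → ℝ)
          = (Pi.single (⟨S', hc⟩ : {S : Finset (Fin m) // S.card = t}) (1:ℝ)
              - Pi.single ⟨insert j (S'.erase z), aux_card hc hz hj⟩ 1
              + Pi.single ⟨insert j (R.erase z), aux_card hRcard hzR hjR⟩ 1
              - Pi.single ⟨R, hRcard⟩ 1)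
            - Pi.single ⟨insert j (R.erase z), aux_card hRcard hzR hjR⟩ 1
            + Pi.single ⟨R, hRcard⟩ 1 := by abel
      rw [hcomb]
      exact Submodule.add_mem _ (Submodule.sub_mem _ hgU hT) hT'
  -- swaps keeping z are in U
  have hswap : ∀ (S' : Finset (Fin m)) (hc : S'.card = t) (hz : z ∈ S') (u : Fin m)
      (hu : u ∈ S') (huz : u ≠ z) (v : Fin m) (hv : v ∉ S'),
      Pi.single (⟨S', hc⟩ : {S : Finset (Fin m) // S.card = t}) (1:ℝ)
        - Pi.single ⟨insert v (S'.erase u), aux_card hc hu hv⟩ 1 ∈ U := by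
    intro S' hc hz u hu huz v hv
    have huv : u ≠ v := fun h => hv (h ▸ hu)
    have hvz : v ≠ z := fun h => hv (h ▸ hz)
    have h1 := hL2 v S' hc hz hv
    have hzY : z ∈ insert v (S'.erase u) :=
      Finset.mem_insert_of_mem (Finset.mem_erase.mpr ⟨Ne.symm huz, hz⟩)
    have huY : u ∉ insert v (S'.erase u) := by
      simp only [Finset.mem_insert, Finset.mem_erase]
      rintro (h | ⟨h1', h2'⟩)
      · exact huv h
      · exact h1' rfl
    have h2 := hL2 u (insert v (S'.erase u)) (aux_card hc hu hv) hzY huY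
    have hEq : insert u ((insert v (S'.erase u)).erase z) = insert v (S'.erase z) := by
      ext x
      simp only [Finset.mem_insert, Finset.mem_erase]
      constructor
      · rintro (h | ⟨h1', (h2' | ⟨h3', h4'⟩)⟩)
        · exact Or.inr ⟨h ▸ huz, h ▸ hu⟩
        · exact Or.inl h2'
        · exact Or.inr ⟨h1', h4'⟩
      · rintro (h | ⟨h1', h2'⟩)
        · exact Or.inr ⟨h ▸ hvz, Or.inl h⟩
        · by_cases hx : x = u
          · exact Or.inl hx
          · exact Or.inr ⟨h1', Or.inr ⟨hx, h2'⟩⟩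
    have hTsub : (⟨insert u ((insert v (S'.erase u)).erase z),
          aux_card (aux_card hc hu hv) hzY huY⟩ :
        {S : Finset (Fin m) // S.card = t}) = ⟨insert v (S'.erase z), aux_card hc hz hv⟩ :=
      Subtype.ext hEq
    rw [hTsub] at h2
    have hcomb : (Pi.single (⟨S', hc⟩ : {S : Finset (Fin m) // S.card = t}) 1
        - Pi.single ⟨insert v (S'.erase u), aux_card hc hu hv⟩ 1 :
          {S : Finset (Fin m) // S.card = t} → ℝ)
        = (Pi.single (⟨S', hc⟩ : {S : Finset (Fin m) // S.card = t}) (1:ℝ)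
            - Pi.single ⟨insert v (S'.erase z), aux_card hc hz hv⟩ 1)
          - (Pi.single (⟨insert v (S'.erase u), aux_card hc hu hv⟩ :
              {S : Finset (Fin m) // S.card = t}) (1:ℝ)
            - Pi.single ⟨insert v (S'.erase z), aux_card hc hz hv⟩ 1) := by abel
    rw [hcomb]
    exact Submodule.sub_mem _ h1 h2
  -- every set containing z is in U
  have hmain1 : ∀ (n : ℕ) (S : Finset (Fin m)) (hc : S.card = t) (hz : z ∈ S),
      (S \ R).card ≤ n →
      Pi.single (⟨S, hc⟩ : {S : Finset (Fin m) // S.card = t}) (1:ℝ) ∈ U := by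
    intro n
    induction n with
    | zero =>
      intro S hc hz hle
      have hsub : S ⊆ R := by
        intro x hx
        by_contra hxR
        have : x ∈ S \ R := Finset.mem_sdiff.mpr ⟨hx, hxR⟩
        have := Finset.card_pos.mpr ⟨x, this⟩
        omega
      have hSR : S = R := Finset.eq_of_subset_of_card_le hsub (by omega)
      have : (⟨S, hc⟩ : {S : Finset (Fin m) // S.card = t}) = ⟨R, hRcard⟩ :=
        Subtype.ext hSR
      rw [this]
      exact hUw _ hwR
    | succ n ih =>
      intro S hc hz hle
      by_cases hSR : S = R
      · have : (⟨S, hc⟩ : {S : Finset (Fin m) // S.card = t}) = ⟨R, hRcard⟩ :=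
          Subtype.ext hSR
        rw [this]
        exact hUw _ hwR
      · have hnsub : ¬S ⊆ R := fun h =>
          hSR (Finset.eq_of_subset_of_card_le h (by omega))
        obtain ⟨u, huS, huR⟩ := Finset.not_subset.mp hnsub
        have hnsub2 : ¬R ⊆ S := fun h =>
          hSR (Finset.eq_of_subset_of_card_le h (by omega)).symm
        obtain ⟨v, hvR, hvS⟩ := Finset.not_subset.mp hnsub2
        have huz : u ≠ z := fun h => huR (h ▸ hzR)
        have hzY : z ∈ insert v (S.erase u) :=
          Finset.mem_insert_of_mem (Finset.mem_erase.mpr ⟨Ne.symm huz, hz⟩)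
        have hYsd : (insert v (S.erase u)) \ R = (S \ R).erase u := by
          ext x
          simp only [Finset.mem_sdiff, Finset.mem_insert, Finset.mem_erase]
          constructor
          · rintro ⟨(h | ⟨h1, h2⟩), h3⟩
            · exact absurd (h ▸ hvR) h3
            · exact ⟨h1, h2, h3⟩
          · rintro ⟨h1, h2, h3⟩
            exact ⟨Or.inr ⟨h1, h2⟩, h3⟩
        have huSR : u ∈ S \ R := Finset.mem_sdiff.mpr ⟨huS, huR⟩
        have hYle : ((insert v (S.erase u)) \ R).card ≤ n := by
          rw [hYsd, Finset.card_erase_of_mem huSR]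
          have := Finset.card_pos.mpr ⟨u, huSR⟩
          omega
        have hY := ih (insert v (S.erase u)) (aux_card hc huS hvS) hzY hYle
        have hsw := hswap S hc hz u huS huz v hvS
        have hcomb : (Pi.single (⟨S, hc⟩ : {S : Finset (Fin m) // S.card = t}) 1 :
              {S : Finset (Fin m) // S.card = t} → ℝ)
            = (Pi.single (⟨S, hc⟩ : {S : Finset (Fin m) // S.card = t}) (1:ℝ)
                - Pi.single ⟨insert v (S.erase u), aux_card hc huS hvS⟩ 1)
              + Pi.single ⟨insert v (S.erase u), aux_card hc huS hvS⟩ 1 := by abel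
        rw [hcomb]
        exact Submodule.add_mem _ hsw hY
  -- every basis vector is in U
  have hall : ∀ (S : {S : Finset (Fin m) // S.card = t}), Pi.single S (1:ℝ) ∈ U := by
    rintro ⟨S, hc⟩
    by_cases hzS : z ∈ S
    · exact hmain1 (S \ R).card S hc hzS le_rfl
    · have hne : S.Nonempty := Finset.card_pos.mp (by omega)
      obtain ⟨j, hjS⟩ := hne
      have hjz : j ≠ z := fun h => hzS (h ▸ hjS)
      have hzS' : z ∈ insert z (S.erase j) := Finset.mem_insert_self z _
      have hjS' : j ∉ insert z (S.erase j) := by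
        simp only [Finset.mem_insert, Finset.mem_erase]
        rintro (h | ⟨h1, h2⟩)
        · exact hjz h
        · exact h1 rfl
      have hcS' : (insert z (S.erase j)).card = t := by
        rw [Finset.card_insert_of_notMem (fun h => hzS (Finset.mem_of_mem_erase h)),
          Finset.card_erase_of_mem hjS, hc]
        omega
      have h1 := hmain1 (insert z (S.erase j) \ R).card _ hcS' hzS' le_rfl
      have h2 := hL2 j _ hcS' hzS' hjS'
      have hEq : insert j ((insert z (S.erase j)).erase z) = S := by
        rw [Finset.erase_insert (fun h => hzS (Finset.mem_of_mem_erase h))]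
        exact Finset.insert_erase hjS
      have hTsub : (⟨insert j ((insert z (S.erase j)).erase z),
            aux_card hcS' hzS' hjS'⟩ :
          {S : Finset (Fin m) // S.card = t}) = ⟨S, hc⟩ := Subtype.ext hEq
      rw [hTsub] at h2
      have hcomb : (Pi.single (⟨S, hc⟩ : {S : Finset (Fin m) // S.card = t}) 1 :
            {S : Finset (Fin m) // S.card = t} → ℝ)
          = Pi.single (⟨insert z (S.erase j), hcS'⟩ :
              {S : Finset (Fin m) // S.card = t}) (1:ℝ)
            - (Pi.single (⟨insert z (S.erase j), hcS'⟩ :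
                {S : Finset (Fin m) // S.card = t}) (1:ℝ)
              - Pi.single ⟨S, hc⟩ 1) := by abel
      rw [hcomb]
      exact Submodule.sub_mem _ h1 h2
  -- hence U = ⊤
  have hUtop : U = ⊤ := by
    rw [eq_top_iff, ← (Pi.basisFun ℝ {S : Finset (Fin m) // S.card = t}).span_eq,
      Submodule.span_le]
    rintro x ⟨S, rfl⟩
    simpa using hall S
  -- A is surjective
  have hrank : LinearMap.range A.mulVecLin = ⊤ := by
    have hr : ∀ j : Fin m, j ≠ z →
        (Pi.single z (1:ℝ) - Pi.single j 1) ∈ LinearMap.range A.mulVecLin := by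
      intro j hjz
      by_cases hjR : j ∈ R
      · have hzP : z ∈ insert k0 (R.erase j) :=
          Finset.mem_insert_of_mem (Finset.mem_erase.mpr ⟨(fun h => hjz h.symm), hzR⟩)
        have hjP : j ∉ insert k0 (R.erase j) := by
          simp only [Finset.mem_insert, Finset.mem_erase]
          rintro (h | ⟨h1, h2⟩)
          · exact hk0R (h ▸ hjR)
          · exact h1 rfl
        exact ⟨_, himg j _ _ (mkstep j (insert k0 (R.erase j)) (cardPa j hjR) hzP hjP)⟩
      · exact ⟨_, himg j _ _ (mkstep j R hRcard hzR hjR)⟩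
    have hcolR : (fun i => if i ∈ R then (1:ℝ) else 0) ∈ LinearMap.range A.mulVecLin :=
      ⟨Pi.single ⟨R, hRcard⟩ 1, hcol ⟨R, hRcard⟩⟩
    have hsum : (∑ x ∈ R, (Pi.single z (1:ℝ) - Pi.single x 1))
        ∈ LinearMap.range A.mulVecLin := by
      apply Submodule.sum_mem
      intro x hx
      by_cases hxz : x = z
      · subst hxz; simp only [sub_self]; exact Submodule.zero_mem _
      · exact hr x hxz
    have hkey : (t : ℝ) • (Pi.single z 1 : Fin m → ℝ)
        = (fun i => if i ∈ R then (1:ℝ) else 0) + ∑ x ∈ R, (Pi.single z 1 - Pi.single x 1) := by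
      funext i
      simp only [Pi.smul_apply, Pi.add_apply, Finset.sum_apply, Pi.sub_apply,
        Pi.single_apply, smul_eq_mul]
      rw [Finset.sum_sub_distrib, Finset.sum_const, Finset.sum_ite_eq R i (fun _ => (1:ℝ))]
      rw [hRcard]
      by_cases h1 : i = z
      · subst h1
        simp [hzR]
      · simp [h1]
    have hz1 : Pi.single z (1:ℝ) ∈ LinearMap.range A.mulVecLin := by
      have htm' : (t : ℝ) ≠ 0 := Nat.cast_ne_zero.mpr (by omega)
      have hmem : (t : ℝ) • (Pi.single z 1 : Fin m → ℝ) ∈ LinearMap.range A.mulVecLin := by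
        rw [hkey]; exact Submodule.add_mem _ hcolR hsum
      have := Submodule.smul_mem _ ((t : ℝ)⁻¹) hmem
      rwa [smul_smul, inv_mul_cancel₀ htm', one_smul] at this
    rw [eq_top_iff, ← (Pi.basisFun ℝ (Fin m)).span_eq, Submodule.span_le]
    rintro x ⟨i, rfl⟩
    simp only [Pi.basisFun_apply, SetLike.mem_coe]
    by_cases hiz : i = z
    · subst hiz; exact hz1
    · have : (Pi.single i 1 : Fin m → ℝ) = Pi.single z 1 - (Pi.single z 1 - Pi.single i 1) := by abel
      rw [this]
      exact Submodule.sub_mem _ hz1 (hr i hiz)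
  -- finrank bookkeeping
  have hrn := LinearMap.finrank_range_add_finrank_ker A.mulVecLin
  rw [hrank, finrank_top, Module.finrank_fintype_fun_eq_card, Fintype.card_fin] at hrn
  have hXle : Module.finrank ℝ (Submodule.span ℝ (Set.range w)) ≤ m := by
    have h1 : Module.finrank ℝ (Submodule.span ℝ (Set.range w))
        ≤ (Set.range w).toFinset.card := finrank_span_le_card _
    have h2 : (Set.range w).toFinset.card ≤ m := by
      rw [Set.toFinset_card]
      simpa using Fintype.card_range_le w
    omega
  have hsup := Submodule.finrank_sup_add_finrank_inf_eq
    (Submodule.span ℝ Gen) (Submodule.span ℝ (Set.range w))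
  rw [← hUdef, hUtop, finrank_top, Module.finrank_fintype_fun_eq_card] at hsup
  have hle : Module.finrank ℝ (LinearMap.ker A.mulVecLin)
      ≤ Module.finrank ℝ (Submodule.span ℝ Gen) := by
    rw [Module.finrank_fintype_fun_eq_card] at hrn
    omega
  exact Submodule.eq_of_le_of_finrank_le hker hle
end

section
/- Let 0 < t < m, fix θ ∈ ℝ^m, and for each t-subset S of [m] set w(S) = |⟨θ, 1_S⟩ mod 1| ∈ [0, 1/2]. If some t-subset S₀ has w(S₀) = δ, then the expectation over a uniformly random t-subset S satisfies E[w(S)²] ≥ δ²/(4m²). -/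
open scoped BigOperators

open Finset

/-- distance to nearest integer of a difference is at most sum of distances. -/
private lemma nid_sub_le (x y : ℝ) :
    |x - y - (round (x - y) : ℤ)| ≤ |x - (round x : ℤ)| + |y - (round y : ℤ)| := by
  calc |x - y - ((round (x - y) : ℤ) : ℝ)|
      ≤ |x - y - ((round x - round y : ℤ) : ℝ)| := round_le (x - y) _
    _ = |(x - (round x : ℤ)) - (y - (round y : ℤ))| := by push_cast; ring_nf
    _ ≤ _ := abs_sub _ _

private lemma nid_add_le (x y : ℝ) :
    |x + y - (round (x + y) : ℤ)| ≤ |x - (round x : ℤ)| + |y - (round y : ℤ)| := by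
  calc |x + y - ((round (x + y) : ℤ) : ℝ)|
      ≤ |x + y - ((round x + round y : ℤ) : ℝ)| := round_le (x + y) _
    _ = |(x - (round x : ℤ)) + (y - (round y : ℤ))| := by push_cast; ring_nf
    _ ≤ _ := abs_add_le _ _

/-- Cauchy–Schwarz style bound for a nonnegative function. -/
private lemma sum_le_sqrt_card_mul {α : Type*} (s : Finset α) (f : α → ℝ)
    (hf : ∀ a ∈ s, 0 ≤ f a) {T : ℝ} (h : ∑ a ∈ s, f a ^ 2 ≤ T) :
    ∑ a ∈ s, f a ≤ Real.sqrt (s.card * T) := by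
  have h0 : 0 ≤ ∑ a ∈ s, f a := Finset.sum_nonneg hf
  have hT : (0 : ℝ) ≤ T := le_trans (Finset.sum_nonneg fun a _ => sq_nonneg _) h
  rw [Real.le_sqrt h0 (by positivity)]
  calc (∑ a ∈ s, f a) ^ 2 ≤ (s.card : ℝ) * ∑ a ∈ s, f a ^ 2 := sq_sum_le_card_mul_sum_sq
    _ ≤ (s.card : ℝ) * T := by
        exact mul_le_mul_of_nonneg_left h (by positivity)

private lemma nat_key_ineq (m t : ℕ) (ht : 0 < t) (htm : t < m) :
    t * (m - t) * m.choose t = m * (m - 1) * (m - 2).choose (t - 1) := by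
  obtain ⟨a, rfl⟩ : ∃ a, m = a + 2 := ⟨m - 2, by omega⟩
  obtain ⟨b, rfl⟩ : ∃ b, t = b + 1 := ⟨t - 1, by omega⟩
  have h1 : (a + 2) * (a + 1).choose b = (a + 2).choose (b + 1) * (b + 1) :=
    Nat.add_one_mul_choose_eq (a + 1) b
  have h2 : (a + 1).choose (b + 1) * (b + 1) = (a + 1).choose b * (a + 1 - b) :=
    Nat.choose_succ_right_eq (a + 1) b
  have h3 : (a + 1) * a.choose b = (a + 1).choose (b + 1) * (b + 1) :=
    Nat.add_one_mul_choose_eq a b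
  have hb : b ≤ a := by omega
  have hsub : a + 2 - (b + 1) = a + 1 - b := by omega
  simp only [Nat.add_sub_cancel, hsub]
  calc (b + 1) * (a + 1 - b) * (a + 2).choose (b + 1)
      = (a + 1 - b) * ((a + 2).choose (b + 1) * (b + 1)) := by ring
    _ = (a + 1 - b) * ((a + 2) * (a + 1).choose b) := by rw [h1]
    _ = (a + 2) * ((a + 1).choose b * (a + 1 - b)) := by ring
    _ = (a + 2) * ((a + 1).choose (b + 1) * (b + 1)) := by rw [h2]
    _ = (a + 2) * ((a + 1) * a.choose b) := by rw [h3]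
    _ = (a + 2) * (a + 1) * a.choose b := by ring

/-- for `0 < t < m`, `θ ∈ ℝ^m`, and `w(S) = |⟨θ, 1_S⟩ mod 1|` (distance
of `⟨θ, 1_S⟩` to the nearest integer), if some `t`-subset `S₀` has `w(S₀) = δ`, then
the expectation over a uniform random `t`-subset `S` satisfies `E[w(S)²] ≥ δ²/(4m²)`. -/
theorem stmt_14 (m t : ℕ) (ht : 0 < t) (htm : t < m) (θ : Fin m → ℝ) (δ : ℝ)
    (w : Finset (Fin m) → ℝ)
    (hw : ∀ S, w S = |(∑ i ∈ S, θ i) - (round (∑ i ∈ S, θ i) : ℤ)|)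
    (S₀ : Finset (Fin m)) (hS₀ : S₀.card = t) (hδ : w S₀ = δ) :
    δ ^ 2 / (4 * (m : ℝ) ^ 2) ≤
      (∑ S ∈ Finset.powersetCard t (Finset.univ : Finset (Fin m)), (w S) ^ 2) /
        (Nat.choose m t : ℝ) := by
  classical
  have hwnn : ∀ S, 0 ≤ w S := fun S => by rw [hw]; exact abs_nonneg _
  have hδnn : 0 ≤ δ := hδ ▸ hwnn S₀
  set Ft : Finset (Finset (Fin m)) := Finset.powersetCard t Finset.univ with hFt
  set SS : ℝ := ∑ S ∈ Ft, w S ^ 2 with hSS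
  have hSSnn : 0 ≤ SS := Finset.sum_nonneg fun _ _ => sq_nonneg _
  have hCpos : 0 < m.choose t := Nat.choose_pos htm.le
  have hC'pos : 0 < (m - 2).choose (t - 1) := Nat.choose_pos (by omega)
  set C' : ℕ := (m - 2).choose (t - 1) with hC'
  set P : ℝ := 2 * Real.sqrt (SS / C') with hP
  have hCr : (0 : ℝ) < (m.choose t : ℝ) := by exact_mod_cast hCpos
  have hC'r : (0 : ℝ) < (C' : ℝ) := by exact_mod_cast hC'pos
  -- membership in Ft
  have hmemFt : ∀ A : Finset (Fin m), A.card = t → A ∈ Ft := fun A hA =>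
    Finset.mem_powersetCard.mpr ⟨Finset.subset_univ A, hA⟩
  -- sum of squares over any subfamily bounded by SS
  have hsub : ∀ F : Finset (Finset (Fin m)), F ⊆ Ft → ∑ A ∈ F, w A ^ 2 ≤ SS := by
    intro F hF
    exact Finset.sum_le_sum_of_subset_of_nonneg hF fun _ _ _ => sq_nonneg _
  -- pair bound
  have hpair : ∀ i j : Fin m, i ∈ S₀ → j ∉ S₀ →
      |(θ i - θ j) - (round (θ i - θ j) : ℤ)| ≤ P := by
    intro i j hiS hjS
    have hij : i ≠ j := fun h => hjS (h ▸ hiS)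
    set U : Finset (Fin m) := Finset.univ \ {i, j} with hU
    have hUcard : U.card = m - 2 := by
      rw [hU, Finset.card_sdiff_of_subset (Finset.subset_univ _)]
      simp [Finset.card_insert_of_notMem, hij]
    set F : Finset (Finset (Fin m)) :=
      (Finset.powersetCard (t - 1) U).image (insert j) with hF
    have hiU : i ∉ U → True := fun _ => trivial
    have hmem : ∀ A ∈ F, A.card = t ∧ j ∈ A ∧ i ∉ A := by
      intro A hA
      obtain ⟨B, hB, rfl⟩ := Finset.mem_image.mp hA
      obtain ⟨hBsub, hBcard⟩ := Finset.mem_powersetCard.mp hB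
      have hjB : j ∉ B := fun h => by
        have := hBsub h; simp [hU] at this
      have hiB : i ∉ B := fun h => by
        have := hBsub h; simp [hU] at this
      refine ⟨?_, Finset.mem_insert_self _ _, ?_⟩
      · rw [Finset.card_insert_of_notMem hjB, hBcard]; omega
      · simp [Finset.mem_insert, hij, hiB]
    have hinj : Set.InjOn (insert j) (Finset.powersetCard (t - 1) U : Set (Finset (Fin m))) := by
      intro B₁ h₁ B₂ h₂ hEq
      have hj₁ : j ∉ B₁ := fun h => by
        have := (Finset.mem_powersetCard.mp (by exact_mod_cast h₁)).1 h; simp [hU] at this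
      have hj₂ : j ∉ B₂ := fun h => by
        have := (Finset.mem_powersetCard.mp (by exact_mod_cast h₂)).1 h; simp [hU] at this
      have := congrArg (fun s => Finset.erase s j) hEq
      simpa [Finset.erase_insert, hj₁, hj₂] using this
    have hFcard : F.card = C' := by
      rw [hF, Finset.card_image_of_injOn hinj, Finset.card_powersetCard, hUcard]
    -- swap map
    set σ : Finset (Fin m) → Finset (Fin m) := fun A => insert i (A.erase j) with hσ
    have hσprop : ∀ A ∈ F, σ A ∈ Ft ∧
        (∑ x ∈ σ A, θ x) = (∑ x ∈ A, θ x) + (θ i - θ j) := by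
      intro A hA
      obtain ⟨hAcard, hjA, hiA⟩ := hmem A hA
      have hiAe : i ∉ A.erase j := fun h => hiA (Finset.mem_of_mem_erase h)
      constructor
      · apply hmemFt
        rw [hσ]; simp only
        rw [Finset.card_insert_of_notMem hiAe, Finset.card_erase_of_mem hjA, hAcard]
        omega
      · rw [hσ]; simp only
        rw [Finset.sum_insert hiAe, Finset.sum_erase_eq_sub hjA]
        ring
    -- pointwise bound
    have hptwise : ∀ A ∈ F,
        |(θ i - θ j) - (round (θ i - θ j) : ℤ)| ≤ w (σ A) + w A := by
      intro A hA
      have hsum := (hσprop A hA).2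
      have key := nid_sub_le (∑ x ∈ σ A, θ x) (∑ x ∈ A, θ x)
      have : (∑ x ∈ σ A, θ x) - (∑ x ∈ A, θ x) = θ i - θ j := by rw [hsum]; ring
      rw [this] at key
      calc |(θ i - θ j) - (round (θ i - θ j) : ℤ)| ≤
          |(∑ x ∈ σ A, θ x) - (round (∑ x ∈ σ A, θ x) : ℤ)| +
          |(∑ x ∈ A, θ x) - (round (∑ x ∈ A, θ x) : ℤ)| := key
        _ = w (σ A) + w A := by rw [hw (σ A), hw A]
    -- sum the pointwise bound
    have hsum1 : ∑ A ∈ F, w A ≤ Real.sqrt (C' * SS) := by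
      have := sum_le_sqrt_card_mul F w (fun A _ => hwnn A)
        (hsub F (fun A hA => hmemFt A (hmem A hA).1))
      rwa [hFcard] at this
    have hσinj : Set.InjOn σ (F : Set (Finset (Fin m))) := by
      intro A₁ h₁ A₂ h₂ hEq
      obtain ⟨-, hj₁, hi₁⟩ := hmem A₁ (by exact_mod_cast h₁)
      obtain ⟨-, hj₂, hi₂⟩ := hmem A₂ (by exact_mod_cast h₂)
      have hrec : ∀ A : Finset (Fin m), j ∈ A → i ∉ A → insert j ((σ A).erase i) = A := by
        intro A hjA hiA
        rw [hσ]; simp only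
        rw [Finset.erase_insert (fun h => hiA (Finset.mem_of_mem_erase h))]
        exact Finset.insert_erase hjA
      rw [← hrec A₁ hj₁ hi₁, ← hrec A₂ hj₂ hi₂, hEq]
    have hsum2 : ∑ A ∈ F, w (σ A) ≤ Real.sqrt (C' * SS) := by
      have := sum_le_sqrt_card_mul F (fun A => w (σ A)) (fun A _ => hwnn _) (T := SS) ?_
      · rwa [hFcard] at this
      · have himg : ∑ A ∈ F, w (σ A) ^ 2 = ∑ B ∈ F.image σ, w B ^ 2 := by
          rw [Finset.sum_image (fun x hx y hy h => hσinj hx hy h)]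
        rw [himg]
        apply hsub
        intro B hB
        obtain ⟨A, hA, rfl⟩ := Finset.mem_image.mp hB
        exact (hσprop A hA).1
    have hlower : (C' : ℝ) * |(θ i - θ j) - (round (θ i - θ j) : ℤ)| ≤
        ∑ A ∈ F, (w (σ A) + w A) := by
      have := Finset.card_nsmul_le_sum F
        (fun A => w (σ A) + w A) _ (fun A hA => hptwise A hA)
      rwa [hFcard, nsmul_eq_mul] at this
    have htotal : (C' : ℝ) * |(θ i - θ j) - (round (θ i - θ j) : ℤ)| ≤
        2 * Real.sqrt (C' * SS) := by
      calc (C' : ℝ) * |(θ i - θ j) - (round (θ i - θ j) : ℤ)| ≤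
          ∑ A ∈ F, (w (σ A) + w A) := hlower
        _ = (∑ A ∈ F, w (σ A)) + ∑ A ∈ F, w A := Finset.sum_add_distrib
        _ ≤ Real.sqrt (C' * SS) + Real.sqrt (C' * SS) := add_le_add hsum2 hsum1
        _ = 2 * Real.sqrt (C' * SS) := by ring
    have hsqrt_eq : Real.sqrt ((C' : ℝ) * SS) = (C' : ℝ) * Real.sqrt (SS / C') := by
      calc Real.sqrt ((C' : ℝ) * SS) = Real.sqrt C' * Real.sqrt SS :=
            Real.sqrt_mul (by positivity) _
        _ = ((C' : ℝ) / Real.sqrt C') * Real.sqrt SS := by rw [Real.div_sqrt]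
        _ = (C' : ℝ) * (Real.sqrt SS / Real.sqrt C') := by ring
        _ = (C' : ℝ) * Real.sqrt (SS / C') := by rw [Real.sqrt_div hSSnn]
    rw [hsqrt_eq] at htotal
    rw [hP]
    nlinarith [htotal, hC'r]
  -- walking lemma
  have key : ∀ n : ℕ, ∀ B : Finset (Fin m), B.card = t → (S₀ \ B).card ≤ n →
      w S₀ ≤ w B + (S₀ \ B).card * P := by
    intro n
    induction n with
    | zero =>
      intro B hB h0
      have hempty : S₀ \ B = ∅ := Finset.card_eq_zero.mp (Nat.le_zero.mp h0)
      have hSB : S₀ ⊆ B := Finset.sdiff_eq_empty_iff_subset.mp hempty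
      have : S₀ = B := Finset.eq_of_subset_of_card_le hSB (by rw [hB, hS₀])
      rw [← this]
      simp
    | succ n ih =>
      intro B hB hcard
      rcases Nat.eq_zero_or_pos (S₀ \ B).card with h0 | hpos
      · have hempty : S₀ \ B = ∅ := Finset.card_eq_zero.mp h0
        have hSB : S₀ ⊆ B := Finset.sdiff_eq_empty_iff_subset.mp hempty
        have : S₀ = B := Finset.eq_of_subset_of_card_le hSB (by rw [hB, hS₀])
        rw [← this]
        simp
      · obtain ⟨i, hi⟩ := Finset.card_pos.mp hpos
        have hiS₀ : i ∈ S₀ := (Finset.mem_sdiff.mp hi).1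
        have hiB : i ∉ B := (Finset.mem_sdiff.mp hi).2
        have hBS₀ : (B \ S₀).Nonempty := by
          rw [← Finset.card_pos]
          have h1 : (B \ S₀).card + (B ∩ S₀).card = B.card :=
            Finset.card_sdiff_add_card_inter B S₀
          have h2 : (S₀ \ B).card + (S₀ ∩ B).card = S₀.card :=
            Finset.card_sdiff_add_card_inter S₀ B
          have h3 : (B ∩ S₀).card = (S₀ ∩ B).card := by rw [Finset.inter_comm]
          omega
        obtain ⟨j, hj⟩ := hBS₀
        have hjB : j ∈ B := (Finset.mem_sdiff.mp hj).1
        have hjS₀ : j ∉ S₀ := (Finset.mem_sdiff.mp hj).2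
        set B' : Finset (Fin m) := insert i (B.erase j) with hB'
        have hiBe : i ∉ B.erase j := fun h => hiB (Finset.mem_of_mem_erase h)
        have hB'card : B'.card = t := by
          rw [hB', Finset.card_insert_of_notMem hiBe, Finset.card_erase_of_mem hjB, hB]
          omega
        have hsdiff : S₀ \ B' = (S₀ \ B).erase i := by
          ext x
          simp only [hB', Finset.mem_sdiff, Finset.mem_insert, Finset.mem_erase, not_or,
            Finset.mem_sdiff]
          constructor
          · rintro ⟨hxS, hxi, hxe⟩
            refine ⟨hxi, hxS, fun hxB => hxe ⟨fun hxj => hjS₀ (hxj ▸ hxS), hxB⟩⟩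
          · rintro ⟨hxi, hxS, hxB⟩
            exact ⟨hxS, hxi, fun h => hxB h.2⟩
        have hsdcard : (S₀ \ B').card = (S₀ \ B).card - 1 := by
          rw [hsdiff, Finset.card_erase_of_mem hi]
        have hstep : w B' ≤ w B + P := by
          have hsum : (∑ x ∈ B', θ x) = (∑ x ∈ B, θ x) + (θ i - θ j) := by
            rw [hB']
            rw [Finset.sum_insert hiBe, Finset.sum_erase_eq_sub hjB]
            ring
          have := nid_add_le (∑ x ∈ B, θ x) (θ i - θ j)
          calc w B' = |(∑ x ∈ B', θ x) - (round (∑ x ∈ B', θ x) : ℤ)| := hw B'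
            _ = |((∑ x ∈ B, θ x) + (θ i - θ j)) -
                (round ((∑ x ∈ B, θ x) + (θ i - θ j)) : ℤ)| := by rw [hsum]
            _ ≤ |(∑ x ∈ B, θ x) - (round (∑ x ∈ B, θ x) : ℤ)| +
                |(θ i - θ j) - (round (θ i - θ j) : ℤ)| := this
            _ ≤ w B + P := by
                rw [← hw B]
                exact add_le_add_right (hpair i j hiS₀ hjS₀) _
        have hih := ih B' hB'card (by omega)
        have hPnn : 0 ≤ P := by rw [hP]; positivity
        have hcast : ((S₀ \ B').card : ℝ) = ((S₀ \ B).card : ℝ) - 1 := by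
          rw [hsdcard]
          have : 1 ≤ (S₀ \ B).card := hpos
          push_cast [Nat.cast_sub this]
          ring
        calc w S₀ ≤ w B' + (S₀ \ B').card * P := hih
          _ ≤ (w B + P) + (S₀ \ B').card * P := by
              exact add_le_add_left hstep _
          _ = w B + (((S₀ \ B').card : ℝ) + 1) * P := by ring
          _ = w B + (S₀ \ B).card * P := by rw [hcast]; ring
  -- minimizing set
  have hFtne : Ft.Nonempty := by
    rw [hFt]
    apply Finset.powersetCard_nonempty.mpr
    simp [htm.le]
  obtain ⟨Smin, hSminmem, hSminle⟩ := Finset.exists_min_image Ft w hFtne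
  have hSmincard : Smin.card = t := (Finset.mem_powersetCard.mp hSminmem).2
  have hFtcard : (Ft.card : ℝ) = (m.choose t : ℝ) := by
    rw [hFt, Finset.card_powersetCard]
    simp
  have hwmin : w Smin ≤ Real.sqrt (SS / m.choose t) := by
    have hsq : w Smin ^ 2 * m.choose t ≤ SS := by
      have : ∀ S ∈ Ft, w Smin ^ 2 ≤ w S ^ 2 := fun S hS =>
        pow_le_pow_left₀ (hwnn Smin) (hSminle S hS) 2
      have hnsmul := Finset.card_nsmul_le_sum Ft (fun S => w S ^ 2) _ this
      rw [nsmul_eq_mul] at hnsmul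
      calc w Smin ^ 2 * m.choose t = (Ft.card : ℝ) * w Smin ^ 2 := by
            rw [hFtcard]; ring
        _ ≤ SS := hnsmul
    rw [Real.le_sqrt (hwnn Smin) (div_nonneg hSSnn hCr.le)]
    rw [le_div_iff₀ hCr]
    exact hsq
  -- combine
  set k : ℕ := (S₀ \ Smin).card with hk
  have hmain : w S₀ ≤ w Smin + k * P := key k Smin hSmincard le_rfl
  have hkt : k ≤ t := by
    rw [hk, ← hS₀]
    exact Finset.card_le_card (Finset.sdiff_subset)
  have hkmt : k ≤ m - t := by
    have hsub2 : S₀ \ Smin ⊆ Finset.univ \ Smin := by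
      exact Finset.sdiff_subset_sdiff (Finset.subset_univ _) le_rfl
    have := Finset.card_le_card hsub2
    rw [Finset.card_sdiff_of_subset (Finset.subset_univ _)] at this
    simpa [hSmincard] using this
  -- k * P ≤ (2m - 1) * sqrt (SS / C)
  have hnat : 4 * k ^ 2 * m.choose t ≤ (2 * m - 1) ^ 2 * C' := by
    have hid := nat_key_ineq m t ht htm
    have hk2 : k ^ 2 ≤ t * (m - t) := by
      calc k ^ 2 = k * k := sq k
        _ ≤ t * (m - t) := Nat.mul_le_mul hkt hkmt
    have h4m : 4 * (m * (m - 1)) ≤ (2 * m - 1) ^ 2 := by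
      obtain ⟨a, rfl⟩ : ∃ a, m = a + 1 := ⟨m - 1, by omega⟩
      simp only [Nat.add_sub_cancel]
      have : 2 * (a + 1) - 1 = 2 * a + 1 := by omega
      rw [this]
      nlinarith
    have hpos' : 0 < t * (m - t) := Nat.mul_pos ht (by omega)
    have hle : 4 * k ^ 2 * m.choose t * (t * (m - t)) ≤
        (2 * m - 1) ^ 2 * C' * (t * (m - t)) := by
      calc 4 * k ^ 2 * m.choose t * (t * (m - t))
          = 4 * k ^ 2 * (t * (m - t) * m.choose t) := by ring
        _ = 4 * k ^ 2 * (m * (m - 1) * C') := by rw [hid]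
        _ ≤ 4 * (t * (m - t)) * (m * (m - 1) * C') := by
            exact Nat.mul_le_mul_right _ (Nat.mul_le_mul_left 4 hk2)
        _ = (4 * (m * (m - 1))) * (C' * (t * (m - t))) := by ring
        _ ≤ ((2 * m - 1) ^ 2) * (C' * (t * (m - t))) :=
            Nat.mul_le_mul_right _ h4m
        _ = (2 * m - 1) ^ 2 * C' * (t * (m - t)) := by ring
    exact Nat.le_of_mul_le_mul_right hle hpos'
  have hnatr : 4 * (k : ℝ) ^ 2 * (m.choose t : ℝ) ≤ (2 * (m : ℝ) - 1) ^ 2 * (C' : ℝ) := by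
    have h1 : ((2 * m - 1 : ℕ) : ℝ) = 2 * (m : ℝ) - 1 := by
      have : 1 ≤ 2 * m := by omega
      push_cast [Nat.cast_sub this]
      ring
    calc 4 * (k : ℝ) ^ 2 * (m.choose t : ℝ) = ((4 * k ^ 2 * m.choose t : ℕ) : ℝ) := by
          push_cast; ring
      _ ≤ (((2 * m - 1) ^ 2 * C' : ℕ) : ℝ) := Nat.cast_le.mpr hnat
      _ = (2 * (m : ℝ) - 1) ^ 2 * (C' : ℝ) := by rw [Nat.cast_mul, Nat.cast_pow, h1]
  have hkP : (k : ℝ) * P ≤ (2 * (m : ℝ) - 1) * Real.sqrt (SS / m.choose t) := by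
    have ha : (0 : ℝ) ≤ (k : ℝ) * P := by
      have : 0 ≤ P := by rw [hP]; positivity
      positivity
    have hb : (0 : ℝ) ≤ (2 * (m : ℝ) - 1) * Real.sqrt (SS / m.choose t) := by
      have hm1 : (1 : ℝ) ≤ (m : ℝ) := by exact_mod_cast (by omega : 1 ≤ m)
      have : (0 : ℝ) ≤ 2 * (m : ℝ) - 1 := by linarith
      positivity
    have hsq : ((k : ℝ) * P) ^ 2 ≤ ((2 * (m : ℝ) - 1) * Real.sqrt (SS / m.choose t)) ^ 2 := by
      rw [hP]
      have e1 : ((k : ℝ) * (2 * Real.sqrt (SS / C'))) ^ 2 =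
          4 * (k : ℝ) ^ 2 * (SS / C') := by
        rw [mul_pow, mul_pow, Real.sq_sqrt (by positivity)]
        ring
      have e2 : ((2 * (m : ℝ) - 1) * Real.sqrt (SS / m.choose t)) ^ 2 =
          (2 * (m : ℝ) - 1) ^ 2 * (SS / m.choose t) := by
        rw [mul_pow, Real.sq_sqrt (by positivity)]
      rw [e1, e2]
      have hmain2 : 4 * (k : ℝ) ^ 2 * (C' : ℝ)⁻¹ ≤ (2 * (m : ℝ) - 1) ^ 2 * (m.choose t : ℝ)⁻¹ := by
        rw [← div_eq_mul_inv, ← div_eq_mul_inv, div_le_div_iff₀ hC'r hCr]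
        linarith [hnatr]
      calc 4 * (k : ℝ) ^ 2 * (SS / C') = (4 * (k : ℝ) ^ 2 * (C' : ℝ)⁻¹) * SS := by ring
        _ ≤ ((2 * (m : ℝ) - 1) ^ 2 * (m.choose t : ℝ)⁻¹) * SS :=
            mul_le_mul_of_nonneg_right hmain2 hSSnn
        _ = (2 * (m : ℝ) - 1) ^ 2 * (SS / (m.choose t : ℝ)) := by ring
    have := Real.sqrt_le_sqrt hsq
    rwa [Real.sqrt_sq ha, Real.sqrt_sq hb] at this
  have hfinal : δ ≤ 2 * (m : ℝ) * Real.sqrt (SS / m.choose t) := by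
    calc δ = w S₀ := hδ.symm
      _ ≤ w Smin + k * P := hmain
      _ ≤ Real.sqrt (SS / m.choose t) + (2 * (m : ℝ) - 1) * Real.sqrt (SS / m.choose t) :=
          add_le_add hwmin hkP
      _ = 2 * (m : ℝ) * Real.sqrt (SS / m.choose t) := by ring
  have hmr : (0 : ℝ) < (m : ℝ) := by exact_mod_cast (by omega : 0 < m)
  rw [div_le_iff₀ (by positivity)]
  have hsq := pow_le_pow_left₀ hδnn hfinal 2
  calc δ ^ 2 ≤ (2 * (m : ℝ) * Real.sqrt (SS / m.choose t)) ^ 2 := hsq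
    _ = 4 * (m : ℝ) ^ 2 * (SS / m.choose t) := by
        rw [mul_pow, mul_pow, Real.sq_sqrt (by positivity)]
        ring
    _ = SS / (m.choose t : ℝ) * (4 * (m : ℝ) ^ 2) := by ring
end

section
/- Let 0 < t < m, let S be a fixed s-subset of [m] with s ∉ {0, m}, and let T be a uniformly random t-subset of [m]. Then |E[(−1)^{|S ∩ T|}]| ≤ 1 − 1/m. -/
open scoped BigOperators

private lemma choose_aux (n r : ℕ) :
    (n + 2).choose (r + 1) * ((r + 1) * (n + 1 - r)) =
      n.choose r * ((n + 2) * (n + 1)) := by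
  have h1 : (n + 1) * n.choose r = (n + 1).choose (r + 1) * (r + 1) :=
    Nat.add_one_mul_choose_eq n r
  have h2 : (n + 1).choose (r + 1) * (n + 2) =
      (n + 2).choose (r + 1) * (n + 2 - (r + 1)) :=
    Nat.choose_mul_succ_eq (n + 1) (r + 1)
  have h3 : n + 2 - (r + 1) = n + 1 - r := by omega
  rw [h3] at h2
  calc (n + 2).choose (r + 1) * ((r + 1) * (n + 1 - r))
      = ((n + 2).choose (r + 1) * (n + 1 - r)) * (r + 1) := by ring
    _ = ((n + 1).choose (r + 1) * (n + 2)) * (r + 1) := by rw [← h2]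
    _ = ((n + 1).choose (r + 1) * (r + 1)) * (n + 2) := by ring
    _ = ((n + 1) * n.choose r) * (n + 2) := by rw [← h1]
    _ = n.choose r * ((n + 2) * (n + 1)) := by ring

/-- for `0 < t < m` and a fixed `s`-subset `S` of `[m]` with
`s ∉ {0, m}`, a uniformly random `t`-subset `T` satisfies
`|E[(-1)^{|S ∩ T|}]| ≤ 1 - 1/m`. -/
theorem stmt_15 (m t s : ℕ) (ht : 0 < t) (htm : t < m) (hs : 0 < s) (hsm : s < m)
    (S : Finset (Fin m)) (hS : S.card = s) :
    |(∑ T ∈ Finset.powersetCard t (Finset.univ : Finset (Fin m)),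
        (-1 : ℝ) ^ (S ∩ T).card) / (Nat.choose m t : ℝ)| ≤ 1 - 1 / m := by
  classical
  have hm2 : 2 ≤ m := by omega
  obtain ⟨i, hiS⟩ : S.Nonempty := Finset.card_pos.mp (by rw [hS]; exact hs)
  obtain ⟨j, hjc⟩ : Sᶜ.Nonempty := by
    rw [← Finset.card_pos, Finset.card_compl, hS, Fintype.card_fin]; omega
  have hjS : j ∉ S := Finset.mem_compl.mp hjc
  have hij : i ≠ j := fun h => hjS (h ▸ hiS)
  set P := Finset.powersetCard t (Finset.univ : Finset (Fin m)) with hPdef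
  set N := Nat.choose m t with hNdef
  set K := Nat.choose (m - 2) (t - 1) with hKdef
  -- the main swap facts
  have main : ∀ T : Finset (Fin m), i ∈ T → j ∉ T →
      ((-1 : ℝ) ^ (S ∩ T).card + (-1 : ℝ) ^ (S ∩ insert j (T.erase i)).card = 0) ∧
      (insert j (T.erase i)).card = T.card ∧
      insert i ((insert j (T.erase i)).erase j) = T := by
    intro T hiT hjT
    have hiST : i ∈ S ∩ T := Finset.mem_inter.mpr ⟨hiS, hiT⟩
    have hc : S ∩ insert j (T.erase i) = (S ∩ T).erase i := by
      rw [Finset.inter_insert_of_notMem hjS, Finset.inter_erase]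
    have hpos : 0 < (S ∩ T).card := Finset.card_pos.mpr ⟨i, hiST⟩
    obtain ⟨d, hd⟩ : ∃ d, (S ∩ T).card = d + 1 := ⟨(S ∩ T).card - 1, by omega⟩
    have hje : j ∉ T.erase i := fun h => hjT (Finset.mem_of_mem_erase h)
    refine ⟨?_, ?_, ?_⟩
    · rw [hc, Finset.card_erase_of_mem hiST, hd]
      simp [pow_succ]
    · rw [Finset.card_insert_of_notMem hje, Finset.card_erase_of_mem hiT]
      have : 0 < T.card := Finset.card_pos.mpr ⟨i, hiT⟩
      omega
    · rw [Finset.erase_insert hje, Finset.insert_erase hiT]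
  -- the sum over unbalanced sets vanishes
  have hB0 : ∑ T ∈ P.filter (fun T => ¬ (i ∈ T ↔ j ∈ T)),
      (-1 : ℝ) ^ (S ∩ T).card = 0 := by
    apply Finset.sum_involution
      (g := fun T _ => if i ∈ T then insert j (T.erase i) else insert i (T.erase j))
    · intro T hT
      rw [Finset.mem_filter] at hT
      by_cases hiT : i ∈ T
      · have hjT : j ∉ T := fun h => hT.2 (iff_of_true hiT h)
        simp only [if_pos hiT]
        exact (main T hiT hjT).1
      · have hjT : j ∈ T := by
          by_contra hjT
          exact hT.2 (iff_of_false hiT hjT)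
        simp only [if_neg hiT]
        set T' := insert i (T.erase j) with hT'
        have hiT' : i ∈ T' := Finset.mem_insert_self _ _
        have hjT' : j ∉ T' := by
          simp [hT', hij.symm, Finset.mem_erase]
        have hback : insert j (T'.erase i) = T := by
          have hie : i ∉ T.erase j := fun h => hiT (Finset.mem_of_mem_erase h)
          rw [hT', Finset.erase_insert hie, Finset.insert_erase hjT]
        have := (main T' hiT' hjT').1
        rw [hback] at this
        linarith
    · intro T hT _
      rw [Finset.mem_filter] at hT
      by_cases hiT : i ∈ T
      · have hjT : j ∉ T := fun h => hT.2 (iff_of_true hiT h)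
        simp only [if_pos hiT]
        intro h
        exact hjT (h ▸ Finset.mem_insert_self j (T.erase i))
      · simp only [if_neg hiT]
        intro h
        exact hiT (h ▸ Finset.mem_insert_self i (T.erase j))
    · intro T hT
      rw [Finset.mem_filter] at hT
      by_cases hiT : i ∈ T
      · have hjT : j ∉ T := fun h => hT.2 (iff_of_true hiT h)
        obtain ⟨-, -, hinv⟩ := main T hiT hjT
        have hi' : i ∉ insert j (T.erase i) := by
          simp [hij, Finset.mem_erase]
        simp only [if_pos hiT, if_neg hi']
        exact hinv
      · have hjT : j ∈ T := by
          by_contra hjT; exact hT.2 (iff_of_false hiT hjT)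
        have hie : i ∉ T.erase j := fun h => hiT (Finset.mem_of_mem_erase h)
        have hi' : i ∈ insert i (T.erase j) := Finset.mem_insert_self _ _
        simp only [if_neg hiT, if_pos hi']
        rw [Finset.erase_insert hie, Finset.insert_erase hjT]
    · intro T hT
      rw [Finset.mem_filter] at hT ⊢
      obtain ⟨hTP, hTne⟩ := hT
      rw [hPdef, Finset.mem_powersetCard] at hTP
      by_cases hiT : i ∈ T
      · have hjT : j ∉ T := fun h => hTne (iff_of_true hiT h)
        obtain ⟨-, hcard, -⟩ := main T hiT hjT
        simp only [if_pos hiT]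
        constructor
        · rw [hPdef, Finset.mem_powersetCard]
          exact ⟨Finset.subset_univ _, by rw [hcard, hTP.2]⟩
        · intro hiff
          have hj' : j ∈ insert j (T.erase i) := Finset.mem_insert_self _ _
          have hi' : i ∈ insert j (T.erase i) := hiff.mpr hj'
          rcases Finset.mem_insert.mp hi' with h | h
          · exact hij h
          · exact (Finset.notMem_erase i T) h
      · have hjT : j ∈ T := by
          by_contra hjT; exact hTne (iff_of_false hiT hjT)
        set T' := insert i (T.erase j) with hT'
        have hiT' : i ∈ T' := Finset.mem_insert_self _ _
        have hjT' : j ∉ T' := by simp [hT', hij.symm, Finset.mem_erase]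
        simp only [if_neg hiT]
        constructor
        · rw [hPdef, Finset.mem_powersetCard]
          refine ⟨Finset.subset_univ _, ?_⟩
          rw [hT', Finset.card_insert_of_notMem
              (fun h => hiT (Finset.mem_of_mem_erase h)),
            Finset.card_erase_of_mem hjT]
          have : 0 < T.card := Finset.card_pos.mpr ⟨j, hjT⟩
          omega
        · intro hiff
          exact hjT' (hiff.mp hiT')
  -- counting: the unbalanced sets are at least 2K many
  have hD : ((Finset.univ.erase i).erase j).card = m - 2 := by
    rw [Finset.card_erase_of_mem (Finset.mem_erase.mpr ⟨hij.symm, Finset.mem_univ j⟩),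
      Finset.card_erase_of_mem (Finset.mem_univ i), Finset.card_univ, Fintype.card_fin]
    omega
  have hcount : ∀ a b : Fin m, a ≠ b →
      K ≤ (P.filter (fun T => a ∈ T ∧ b ∉ T)).card := by
    intro a b hab
    have hDab : ((Finset.univ.erase a).erase b).card = m - 2 := by
      rw [Finset.card_erase_of_mem (Finset.mem_erase.mpr ⟨hab.symm, Finset.mem_univ b⟩),
        Finset.card_erase_of_mem (Finset.mem_univ a), Finset.card_univ, Fintype.card_fin]
      omega
    have := Finset.card_le_card_of_injOn (f := fun U => insert a U)
      (s := Finset.powersetCard (t - 1) ((Finset.univ.erase a).erase b))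
      (t := P.filter (fun T => a ∈ T ∧ b ∉ T)) ?_ ?_
    · rwa [Finset.card_powersetCard, hDab] at this
    · intro U hU
      rw [Finset.mem_coe, Finset.mem_powersetCard] at hU
      have haU : a ∉ U := fun h => by
        have := hU.1 h
        rw [Finset.mem_erase, Finset.mem_erase] at this
        exact this.2.1 rfl
      have hbU : b ∉ U := fun h => by
        have := hU.1 h
        rw [Finset.mem_erase] at this
        exact this.1 rfl
      rw [Finset.mem_coe, Finset.mem_filter]
      refine ⟨?_, Finset.mem_insert_self _ _, ?_⟩
      · rw [hPdef, Finset.mem_powersetCard]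
        refine ⟨Finset.subset_univ _, ?_⟩
        rw [Finset.card_insert_of_notMem haU, hU.2]
        omega
      · intro h
        rcases Finset.mem_insert.mp h with h | h
        · exact hab h.symm
        · exact hbU h
    · intro U hU V hV hUV
      rw [Finset.mem_coe, Finset.mem_powersetCard] at hU hV
      have haU : a ∉ U := fun h => by
        have := hU.1 h
        rw [Finset.mem_erase, Finset.mem_erase] at this
        exact this.2.1 rfl
      have haV : a ∉ V := fun h => by
        have := hV.1 h
        rw [Finset.mem_erase, Finset.mem_erase] at this
        exact this.2.1 rfl
      have hUV' : insert a U = insert a V := hUV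
      rw [← Finset.erase_insert haU, ← Finset.erase_insert haV, hUV']
  have hdisj : Disjoint (P.filter (fun T => i ∈ T ∧ j ∉ T))
      (P.filter (fun T => j ∈ T ∧ i ∉ T)) := by
    rw [Finset.disjoint_filter]
    rintro T _ ⟨hi', hj'⟩ ⟨_, hi''⟩
    exact hi'' hi'
  have hsub : (P.filter (fun T => i ∈ T ∧ j ∉ T)) ∪
      (P.filter (fun T => j ∈ T ∧ i ∉ T)) ⊆
      P.filter (fun T => ¬ (i ∈ T ↔ j ∈ T)) := by
    intro T hT
    rcases Finset.mem_union.mp hT with h | h <;> rw [Finset.mem_filter] at h ⊢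
    · exact ⟨h.1, fun hiff => h.2.2 (hiff.mp h.2.1)⟩
    · exact ⟨h.1, fun hiff => h.2.2 (hiff.mpr h.2.1)⟩
  have hBcard : 2 * K ≤ (P.filter (fun T => ¬ (i ∈ T ↔ j ∈ T))).card := by
    have h1 := hcount i j hij
    have h2 := hcount j i hij.symm
    have h3 := Finset.card_le_card hsub
    rw [Finset.card_union_of_disjoint hdisj] at h3
    omega
  -- card of the two pieces
  have hPcard : (P.filter (fun T => (i ∈ T ↔ j ∈ T))).card +
      (P.filter (fun T => ¬ (i ∈ T ↔ j ∈ T))).card = N := by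
    rw [Finset.card_filter_add_card_filter_not, hPdef,
      Finset.card_powersetCard, Finset.card_univ, Fintype.card_fin]
  -- bound the sum
  have hsum : |∑ T ∈ P, (-1 : ℝ) ^ (S ∩ T).card| ≤ (N : ℝ) - 2 * K := by
    rw [← Finset.sum_filter_add_sum_filter_not P (fun T => (i ∈ T ↔ j ∈ T)), hB0,
      add_zero]
    calc |∑ T ∈ P.filter (fun T => (i ∈ T ↔ j ∈ T)), (-1 : ℝ) ^ (S ∩ T).card|
        ≤ ∑ T ∈ P.filter (fun T => (i ∈ T ↔ j ∈ T)), |(-1 : ℝ) ^ (S ∩ T).card| :=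
          Finset.abs_sum_le_sum_abs _ _
      _ = ((P.filter (fun T => (i ∈ T ↔ j ∈ T))).card : ℝ) := by
          simp [abs_pow]
      _ ≤ (N : ℝ) - 2 * K := by
          have h' : ((P.filter (fun T => (i ∈ T ↔ j ∈ T))).card : ℝ) + 2 * K ≤ N := by
            exact_mod_cast (by omega :
              (P.filter (fun T => (i ∈ T ↔ j ∈ T))).card + 2 * K ≤ N)
          linarith
  -- the binomial identity and t(m-t) ≥ m-1
  have hid : K * (m * (m - 1)) = N * (t * (m - t)) := by
    have := choose_aux (m - 2) (t - 1)
    have e1 : m - 2 + 2 = m := by omega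
    have e2 : t - 1 + 1 = t := by omega
    have e3 : m - 2 + 1 - (t - 1) = m - t := by omega
    have e4 : m - 2 + 1 = m - 1 := by omega
    rw [e1, e2, e3, e4] at this
    rw [hKdef, hNdef]
    omega
  have htm' : m - 1 ≤ t * (m - t) := by
    obtain ⟨u, hu⟩ : ∃ u, m = t + u := ⟨m - t, by omega⟩
    subst hu
    have hu1 : 1 ≤ u := by omega
    have : t + u - t = u := by omega
    rw [this]
    obtain ⟨a, rfl⟩ : ∃ a, t = a + 1 := ⟨t - 1, by omega⟩
    obtain ⟨b, rfl⟩ : ∃ b, u = b + 1 := ⟨u - 1, by omega⟩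
    have : (a + 1) * (b + 1) = a * b + a + b + 1 := by ring
    omega
  have hNK : N ≤ K * m := by
    have h1 : N * (m - 1) ≤ N * (t * (m - t)) :=
      Nat.mul_le_mul_left N htm'
    rw [← hid] at h1
    have h2 : N * (m - 1) ≤ (K * m) * (m - 1) := by
      calc N * (m - 1) ≤ K * (m * (m - 1)) := h1
        _ = (K * m) * (m - 1) := by ring
    exact Nat.le_of_mul_le_mul_right h2 (by omega)
  -- final arithmetic
  have hNpos : 0 < N := Nat.choose_pos htm.le
  have hNR : (0 : ℝ) < N := by exact_mod_cast hNpos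
  have hmR : (0 : ℝ) < m := by positivity
  rw [abs_div, abs_of_pos hNR, div_le_iff₀ hNR]
  have hKR : (N : ℝ) ≤ K * m := by exact_mod_cast hNK
  have h1 : (N : ℝ) / m ≤ K := (div_le_iff₀ hmR).mpr hKR
  have hK0 : (0 : ℝ) ≤ K := by positivity
  have : (N : ℝ) - 2 * K ≤ (1 - 1 / m) * N := by
    have : (1 - 1 / m) * (N : ℝ) = N - N / m := by ring
    rw [this]
    linarith
  linarith
end

section
/- Let 0 < t < m and let X_n be the sum in 𝔽₂^m of n i.i.d. uniformly random vectors of Hamming weight t, and let Z_n be uniform on the vectors of 𝔽₂^m whose Hamming weight has the same parity as nt. Then the total variation distance between X_n and Z_n is at most C·e^{−2n/m + m} for some absolute constant C (in fact d_TV(X_n, Z_n)² ≤ 2^{m} e^{−2n/m} up to constants). -/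
open scoped BigOperators
open Finset

namespace Stmt16

noncomputable def ee (c : ZMod 2) : ℝ := if c = 1 then -1 else 1

lemma ee_zero : ee 0 = 1 := by norm_num [ee]
lemma ee_one : ee 1 = -1 := by norm_num [ee]
lemma ee_add (a b : ZMod 2) : ee (a + b) = ee a * ee b := by
  rcases (by decide : ∀ c : ZMod 2, c = 0 ∨ c = 1) a with rfl | rfl <;> rcases (by decide : ∀ c : ZMod 2, c = 0 ∨ c = 1) b with rfl | rfl <;> simp [ee, show (1:ZMod 2) + 1 = 0 by decide, show (0:ZMod 2) ≠ 1 by decide, show (1:ZMod 2) ≠ 0 by decide]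

lemma abs_ee (a : ZMod 2) : |ee a| = 1 := by
  rcases (by decide : ∀ c : ZMod 2, c = 0 ∨ c = 1) a with rfl | rfl <;> simp [ee, show (1:ZMod 2) + 1 = 0 by decide, show (0:ZMod 2) ≠ 1 by decide, show (1:ZMod 2) ≠ 0 by decide]

variable {m : ℕ}

def wt (x : Fin m → ZMod 2) : ℕ := (Finset.univ.filter fun a => x a = 1).card

noncomputable def chi (y x : Fin m → ZMod 2) : ℝ := ∏ a, ee (y a * x a)

lemma chi_add (y x x' : Fin m → ZMod 2) : chi y (x + x') = chi y x * chi y x' := by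
  rw [chi, chi, chi, ← Finset.prod_mul_distrib]
  refine Finset.prod_congr rfl fun a _ => ?_
  rw [Pi.add_apply, mul_add, ee_add]

lemma chi_add_left (y y' x : Fin m → ZMod 2) : chi (y + y') x = chi y x * chi y' x := by
  rw [chi, chi, chi, ← Finset.prod_mul_distrib]
  refine Finset.prod_congr rfl fun a _ => ?_
  rw [Pi.add_apply, add_mul, ee_add]

lemma chi_zero (y : Fin m → ZMod 2) : chi y 0 = 1 := by
  simp [chi, ee_zero]

lemma chi_comm (y x : Fin m → ZMod 2) : chi y x = chi x y := by
  unfold chi; exact Finset.prod_congr rfl fun a _ => by rw [mul_comm]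

lemma abs_chi_le (y x : Fin m → ZMod 2) : |chi y x| ≤ 1 := by
  rw [chi, Finset.abs_prod]
  calc ∏ a, |ee (y a * x a)| = ∏ a : Fin m, 1 := by
        exact Finset.prod_congr rfl fun a _ => abs_ee _
    _ ≤ 1 := by simp

lemma sum_zmod2 (f : ZMod 2 → ℝ) : ∑ c, f c = f 0 + f 1 := by
  have h : (Finset.univ : Finset (ZMod 2)) = {0, 1} := by decide
  rw [h, Finset.sum_insert (by decide), Finset.sum_singleton]

lemma sum_ee_mul (d : ZMod 2) : ∑ c : ZMod 2, ee (c * d) = if d = 0 then 2 else 0 := by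
  rw [sum_zmod2]
  rcases (by decide : ∀ c : ZMod 2, c = 0 ∨ c = 1) d with rfl | rfl <;> norm_num [ee_zero, ee_one, show (1:ZMod 2) + 1 = 0 by decide, show (0:ZMod 2) ≠ 1 by decide, show (1:ZMod 2) ≠ 0 by decide]

lemma orth (z : Fin m → ZMod 2) : ∑ y : Fin m → ZMod 2, chi y z = if z = 0 then (2:ℝ)^m else 0 := by
  unfold chi
  rw [← Fintype.piFinset_univ,
    ← Finset.prod_univ_sum (fun _ => (Finset.univ : Finset (ZMod 2))) (fun a c => ee (c * z a))]
  have h : ∀ a : Fin m, (∑ c : ZMod 2, ee (c * z a)) = if z a = 0 then (2:ℝ) else 0 :=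
    fun a => sum_ee_mul (z a)
  rw [Finset.prod_congr rfl fun a _ => h a]
  by_cases hz : z = 0
  · simp [hz]
  · rw [if_neg hz]
    obtain ⟨a, ha⟩ : ∃ a, z a ≠ 0 := by
      by_contra h'
      push_neg at h'
      exact hz (funext h')
    exact Finset.prod_eq_zero (Finset.mem_univ a) (by rw [if_neg ha])


lemma zmod2_ne_one {c : ZMod 2} (h : ¬ c = 1) : c = 0 := by
  fin_cases c
  · rfl
  · exact absurd rfl h

lemma filter_indicator (s : Finset (Fin m)) :
    (Finset.univ.filter fun a => (if a ∈ s then (1 : ZMod 2) else 0) = 1) = s := by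
  ext a
  simp only [Finset.mem_filter, Finset.mem_univ, true_and]
  by_cases h : a ∈ s <;> simp [h]

lemma wt_indicator (s : Finset (Fin m)) :
    wt (fun a => if a ∈ s then (1 : ZMod 2) else 0) = s.card := by
  unfold wt
  rw [filter_indicator]

lemma cardW (t : ℕ) :
    (Finset.univ.filter fun x : Fin m → ZMod 2 => wt x = t).card = m.choose t := by
  have hp : (Finset.powersetCard t (Finset.univ : Finset (Fin m))).card = m.choose t := by
    rw [Finset.card_powersetCard, Finset.card_univ, Fintype.card_fin]
  rw [← hp]
  refine Finset.card_bij' (fun x _ => Finset.univ.filter fun a => x a = 1)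
    (fun s _ => fun a => if a ∈ s then (1 : ZMod 2) else 0) ?_ ?_ ?_ ?_
  · intro x hx
    simp only [Finset.mem_filter, Finset.mem_univ, true_and] at hx
    rw [Finset.mem_powersetCard]
    exact ⟨Finset.filter_subset _ _, hx⟩
  · intro s hs
    rw [Finset.mem_powersetCard] at hs
    simp only [Finset.mem_filter, Finset.mem_univ, true_and]
    rw [wt_indicator]; exact hs.2
  · intro x hx
    funext a
    by_cases h : x a = 1
    · simp [h]
    · simp [h, (zmod2_ne_one h).symm]
  · intro s hs
    ext a
    simp only [Finset.mem_filter, Finset.mem_univ, true_and]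
    by_cases h : a ∈ s <;> simp [h]

lemma card_pair (t : ℕ) (ht : 0 < t) {s s' : Fin m} (hss : s ≠ s') :
    (Finset.univ.filter fun v : Fin m → ZMod 2 => wt v = t ∧ v s = 1 ∧ v s' = 0).card
      = (m - 2).choose (t - 1) := by
  set E := (Finset.univ.erase s).erase s' with hEdef
  have hsE : s ∉ E := fun h => (Finset.mem_erase.1 (Finset.mem_erase.1 h).2).1 rfl
  have hs'E : s' ∉ E := fun h => (Finset.mem_erase.1 h).1 rfl
  have hE : E.card = m - 2 := by
    rw [hEdef, Finset.card_erase_of_mem, Finset.card_erase_of_mem (Finset.mem_univ s),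
      Finset.card_univ, Fintype.card_fin]
    · omega
    · exact Finset.mem_erase.2 ⟨Ne.symm hss, Finset.mem_univ s'⟩
  have hp : (Finset.powersetCard (t - 1) E).card = (m - 2).choose (t - 1) := by
    rw [Finset.card_powersetCard, hE]
  rw [← hp]
  refine Finset.card_bij' (fun v _ => (Finset.univ.filter fun a => v a = 1).erase s)
    (fun B _ => fun a => if a ∈ insert s B then (1 : ZMod 2) else 0) ?_ ?_ ?_ ?_
  · intro v hv
    simp only [Finset.mem_filter, Finset.mem_univ, true_and] at hv
    obtain ⟨hw, hvs, hvs'⟩ := hv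
    rw [Finset.mem_powersetCard]
    constructor
    · intro a ha
      obtain ⟨has, ha1⟩ := Finset.mem_erase.1 ha
      have ha1' : v a = 1 := (Finset.mem_filter.1 ha1).2
      have has' : a ≠ s' := fun h => by rw [h, hvs'] at ha1'; exact one_ne_zero ha1'.symm
      exact Finset.mem_erase.2 ⟨has', Finset.mem_erase.2 ⟨has, Finset.mem_univ a⟩⟩
    · rw [Finset.card_erase_of_mem (Finset.mem_filter.2 ⟨Finset.mem_univ s, hvs⟩)]
      rw [← hw]; rfl
  · intro B hB
    rw [Finset.mem_powersetCard] at hB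
    obtain ⟨hBE, hBc⟩ := hB
    have hsB : s ∉ B := fun h => hsE (hBE h)
    have hs'B : s' ∉ B := fun h => hs'E (hBE h)
    simp only [Finset.mem_filter, Finset.mem_univ, true_and]
    refine ⟨?_, ?_, ?_⟩
    · rw [wt_indicator, Finset.card_insert_of_notMem hsB, hBc]; omega
    · simp
    · have : s' ∉ insert s B := by
        simp only [Finset.mem_insert]
        push_neg
        exact ⟨Ne.symm hss, hs'B⟩
      simp [this]
  · intro v hv
    simp only [Finset.mem_filter, Finset.mem_univ, true_and] at hv
    have hsv : s ∈ Finset.univ.filter fun a => v a = 1 :=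
      Finset.mem_filter.2 ⟨Finset.mem_univ s, hv.2.1⟩
    funext a
    show (if a ∈ insert s ((Finset.univ.filter fun b => v b = 1).erase s) then (1 : ZMod 2) else 0) = v a
    rw [Finset.insert_erase hsv]
    simp only [Finset.mem_filter, Finset.mem_univ, true_and]
    by_cases h : v a = 1
    · simp [h]
    · simp [h, (zmod2_ne_one h).symm]
  · intro B hB
    rw [Finset.mem_powersetCard] at hB
    have hsB : s ∉ B := fun h => hsE (hB.1 h)
    show ((Finset.univ.filter fun a => (if a ∈ insert s B then (1 : ZMod 2) else 0) = 1).erase s) = B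
    rw [filter_indicator, Finset.erase_insert hsB]

lemma choose_ineq {t : ℕ} (ht : 0 < t) (htm : t < m) :
    m.choose t ≤ m * ((m - 2).choose (t - 1)) := by
  have h2 : (m - 2).choose (t - 1) * (m - 1) = (m - 1).choose (t - 1) * (m - t) := by
    have := Nat.choose_mul_succ_eq (m - 2) (t - 1)
    have e1 : m - 2 + 1 = m - 1 := by omega
    have e2 : m - 2 + 1 - (t - 1) = m - t := by omega
    rw [e2, e1] at this
    exact this
  have h1 : m * (m - 1).choose (t - 1) = m.choose t * t := by
    have := Nat.add_one_mul_choose_eq (m - 1) (t - 1)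
    have e1 : m - 1 + 1 = m := by omega
    have e2 : t - 1 + 1 = t := by omega
    rw [e1, e2] at this
    exact this
  have key : (m - 1) * (m * ((m - 2).choose (t - 1))) = m.choose t * (t * (m - t)) := by
    calc (m - 1) * (m * ((m - 2).choose (t - 1)))
        = m * ((m - 2).choose (t - 1) * (m - 1)) := by ring
      _ = m * ((m - 1).choose (t - 1) * (m - t)) := by rw [h2]
      _ = (m * (m - 1).choose (t - 1)) * (m - t) := by ring
      _ = (m.choose t * t) * (m - t) := by rw [h1]
      _ = m.choose t * (t * (m - t)) := by ring
  have htt : m - 1 ≤ t * (m - t) := by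
    obtain ⟨a, ha⟩ : ∃ a, t = a + 1 := ⟨t - 1, by omega⟩
    obtain ⟨b, hb⟩ : ∃ b, m - t = b + 1 := ⟨m - t - 1, by omega⟩
    have : m - 1 = a + b + 1 := by omega
    rw [this, hb, ha]
    nlinarith
  have hm1 : 0 < m - 1 := by omega
  have : (m - 1) * m.choose t ≤ (m - 1) * (m * ((m - 2).choose (t - 1))) := by
    rw [key]
    calc (m - 1) * m.choose t = m.choose t * (m - 1) := by ring
      _ ≤ m.choose t * (t * (m - t)) := Nat.mul_le_mul_left _ htt
  exact Nat.le_of_mul_le_mul_left this hm1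


lemma chi_ones (x : Fin m → ZMod 2) : chi (fun _ => 1) x = (-1 : ℝ) ^ wt x := by
  unfold chi wt
  simp only [one_mul, ee]
  rw [Finset.prod_ite]
  simp [Finset.prod_const]

lemma chi_zero_left (x : Fin m → ZMod 2) : chi 0 x = 1 := by
  simp [chi, ee_zero]

lemma chi_sum {ι : Type*} (y : Fin m → ZMod 2) (s : Finset ι) (v : ι → Fin m → ZMod 2) :
    chi y (∑ i ∈ s, v i) = ∏ i ∈ s, chi y (v i) := by
  induction s using Finset.cons_induction with
  | empty => simp [chi_zero]
  | cons a s ha ih => rw [Finset.sum_cons, Finset.prod_cons, chi_add, ih]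

lemma wt_comp (σ : Equiv.Perm (Fin m)) (x : Fin m → ZMod 2) : wt (x ∘ σ) = wt x := by
  unfold wt
  apply Finset.card_bij (fun a _ => σ a)
  · intro a ha
    simp only [Finset.mem_filter, Finset.mem_univ, true_and, Function.comp_apply] at ha ⊢
    exact ha
  · intro a _ b _ h
    exact σ.injective h
  · intro b hb
    simp only [Finset.mem_filter, Finset.mem_univ, true_and] at hb
    refine ⟨σ.symm b, ?_, by simp⟩
    simp only [Finset.mem_filter, Finset.mem_univ, true_and, Function.comp_apply,
      Equiv.apply_symm_apply]
    exact hb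

lemma cnt_sum (t n : ℕ) (g : (Fin m → ZMod 2) → ℝ) :
    ∑ x : Fin m → ZMod 2, ((Finset.univ.filter fun v : Fin n → Fin m → ZMod 2 =>
        (∀ i, wt (v i) = t) ∧ ∑ i, v i = x).card : ℝ) * g x
      = ∑ v ∈ (Finset.univ.filter fun v : Fin n → Fin m → ZMod 2 => ∀ i, wt (v i) = t),
          g (∑ i, v i) := by
  have h1 : ∀ x : Fin m → ZMod 2, (Finset.univ.filter fun v : Fin n → Fin m → ZMod 2 =>
      (∀ i, wt (v i) = t) ∧ ∑ i, v i = x)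
      = (Finset.univ.filter fun v : Fin n → Fin m → ZMod 2 =>
          ∀ i, wt (v i) = t).filter (fun v => ∑ i, v i = x) := fun x => by
    rw [Finset.filter_filter]
  simp_rw [h1, Finset.card_filter]
  push_cast
  simp_rw [Finset.sum_mul, ite_mul, one_mul, zero_mul]
  rw [Finset.sum_comm]
  refine Finset.sum_congr rfl fun v _ => ?_
  rw [Finset.sum_ite_eq Finset.univ (∑ i, v i) g]
  simp

lemma phat (t n : ℕ) (y : Fin m → ZMod 2) :
    ∑ x : Fin m → ZMod 2, ((Finset.univ.filter fun v : Fin n → Fin m → ZMod 2 =>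
        (∀ i, wt (v i) = t) ∧ ∑ i, v i = x).card : ℝ) * chi y x
      = (∑ w ∈ Finset.univ.filter fun w : Fin m → ZMod 2 => wt w = t, chi y w) ^ n := by
  rw [cnt_sum t n (chi y)]
  have hA : (Finset.univ.filter fun v : Fin n → Fin m → ZMod 2 => ∀ i, wt (v i) = t)
      = Fintype.piFinset (fun _ : Fin n =>
          Finset.univ.filter fun w : Fin m → ZMod 2 => wt w = t) := by
    ext v
    simp [Fintype.mem_piFinset]
  rw [hA]
  simp_rw [chi_sum y Finset.univ]
  rw [← Finset.prod_univ_sum]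
  rw [Finset.prod_const, Finset.card_univ, Fintype.card_fin]

lemma zmod2_add_eq_zero {u w : ZMod 2} (h : u + w = 0) : w = u := by revert u w h; decide

lemma parseval (f : (Fin m → ZMod 2) → ℝ) :
    ∑ y : Fin m → ZMod 2, (∑ x, f x * chi y x) ^ 2 = 2 ^ m * ∑ x, (f x) ^ 2 := by
  have key : ∀ x x' : Fin m → ZMod 2, (∑ y : Fin m → ZMod 2, chi y x * chi y x')
      = if x' = x then (2:ℝ) ^ m else 0 := by
    intro x x'
    have h1 : ∀ y : Fin m → ZMod 2, chi y x * chi y x' = chi y (x + x') :=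
      fun y => (chi_add y x x').symm
    simp_rw [h1]
    rw [orth (x + x')]
    have h2 : x + x' = 0 ↔ x' = x := by
      constructor
      · intro h
        funext a
        exact zmod2_add_eq_zero (congrFun h a)
      · intro h
        rw [h]
        funext a
        simp only [Pi.add_apply, Pi.zero_apply]
        revert a
        intro a
        have : ∀ u : ZMod 2, u + u = 0 := by decide
        exact this (x a)
    simp [h2]
  calc ∑ y : Fin m → ZMod 2, (∑ x, f x * chi y x) ^ 2
      = ∑ y : Fin m → ZMod 2, ∑ x, ∑ x', (f x * chi y x) * (f x' * chi y x') := by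
        refine Finset.sum_congr rfl fun y _ => ?_
        rw [sq, Finset.sum_mul_sum]
    _ = ∑ x, ∑ x', (f x * f x') * ∑ y : Fin m → ZMod 2, chi y x * chi y x' := by
        rw [Finset.sum_comm]
        refine Finset.sum_congr rfl fun x _ => ?_
        rw [Finset.sum_comm]
        refine Finset.sum_congr rfl fun x' _ => ?_
        rw [Finset.mul_sum]
        refine Finset.sum_congr rfl fun y _ => by ring
    _ = ∑ x, (f x) ^ 2 * 2 ^ m := by
        refine Finset.sum_congr rfl fun x _ => ?_
        simp_rw [key, mul_ite, mul_zero]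
        rw [Finset.sum_ite_eq' Finset.univ x (fun x' => f x * f x' * 2 ^ m)]
        simp [sq]
    _ = 2 ^ m * ∑ x, (f x) ^ 2 := by
        rw [Finset.mul_sum]
        exact Finset.sum_congr rfl fun x _ => mul_comm _ _

lemma orth' (y : Fin m → ZMod 2) :
    ∑ x : Fin m → ZMod 2, chi y x = if y = 0 then (2:ℝ)^m else 0 := by
  simp_rw [chi_comm y]
  exact orth y

lemma neg_one_pow_mod (k : ℕ) : (-1:ℝ)^k = if k % 2 = 0 then 1 else -1 := by
  rcases Nat.even_or_odd k with h | h
  · rw [h.neg_one_pow, if_pos (Nat.even_iff.1 h)]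
  · rw [h.neg_one_pow, if_neg (by rw [Nat.odd_iff] at h; omega)]

lemma ind_formula (k : ℕ) (x : Fin m → ZMod 2) :
    (if wt x % 2 = k % 2 then (1:ℝ) else 0) = (1 + (-1)^k * (-1)^(wt x)) / 2 := by
  rw [neg_one_pow_mod k, neg_one_pow_mod (wt x)]
  rcases Nat.mod_two_eq_zero_or_one k with hk | hk <;>
    rcases Nat.mod_two_eq_zero_or_one (wt x) with hx | hx <;>
      simp [hk, hx]

lemma parity_sum (k : ℕ) (y : Fin m → ZMod 2) :
    ∑ x : Fin m → ZMod 2, (if wt x % 2 = k % 2 then (1:ℝ) else 0) * chi y x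
      = ((if y = 0 then (2:ℝ)^m else 0)
          + (-1)^k * (if ((fun _ => 1) + y : Fin m → ZMod 2) = 0 then (2:ℝ)^m else 0)) / 2 := by
  have step : ∀ x : Fin m → ZMod 2, (if wt x % 2 = k % 2 then (1:ℝ) else 0) * chi y x
      = (chi y x + (-1)^k * chi ((fun _ => 1) + y) x) / 2 := by
    intro x
    rw [ind_formula k x, chi_add_left, chi_ones]
    ring
  rw [Finset.sum_congr rfl fun x _ => step x]
  rw [← Finset.sum_div, Finset.sum_add_distrib, ← Finset.mul_sum, orth' y,
    orth' ((fun _ => 1) + y)]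

lemma ones_ne_zero (hm : 0 < m) : ((fun _ => 1 : Fin m → ZMod 2)) ≠ 0 := by
  intro h
  have := congrFun h ⟨0, hm⟩
  exact one_ne_zero this

lemma card_parity (k : ℕ) (hm : 0 < m) :
    (((Finset.univ.filter fun x : Fin m → ZMod 2 => wt x % 2 = k % 2).card : ℝ))
      = 2^(m-1) := by
  have h := parity_sum k (0 : Fin m → ZMod 2)
  simp_rw [chi_zero_left, mul_one] at h
  rw [Finset.sum_boole] at h
  rw [if_pos trivial, add_zero, if_neg (ones_ne_zero hm)] at h
  rw [h]
  have : (2:ℝ)^m = 2^(m-1) * 2 := by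
    rw [← pow_succ]
    congr 1
    omega
  rw [this]
  ring

lemma zmod2_ne_zero {c : ZMod 2} (h : ¬ c = 0) : c = 1 := by
  revert h; fin_cases c <;> intro h
  · exact absurd rfl h
  · rfl

lemma zmod2_ne_add_one {u w : ZMod 2} (h : u ≠ w) : u + 1 = w := by
  revert h; revert u w; decide

lemma zmod2_add_self (u : ZMod 2) : u + u = 0 := by revert u; decide

lemma chi_single (y : Fin m → ZMod 2) (s : Fin m) :
    chi y (fun a => if a = s then 1 else 0) = ee (y s) := by
  unfold chi
  rw [Finset.prod_eq_single s]
  · simp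
  · intro b _ hb
    simp [hb, ee_zero]
  · intro h
    exact absurd (Finset.mem_univ s) h

lemma F_bound {t : ℕ} (ht : 0 < t) (htm : t < m) {y : Fin m → ZMod 2}
    (hy0 : y ≠ 0) (hy1 : y ≠ fun _ => 1) :
    |∑ w ∈ Finset.univ.filter fun w : Fin m → ZMod 2 => wt w = t, chi y w|
      ≤ (1 - 2 / m) * (m.choose t) := by
  obtain ⟨s, hs⟩ : ∃ s, y s = 1 := by
    by_contra h
    push_neg at h
    exact hy0 (funext fun a => zmod2_ne_one (h a))
  obtain ⟨s', hs'⟩ : ∃ s', y s' = 0 := by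
    by_contra h
    push_neg at h
    exact hy1 (funext fun a => zmod2_ne_zero (h a))
  have hss : s ≠ s' := fun h => by rw [h, hs'] at hs; exact absurd hs (by decide)
  set W := Finset.univ.filter fun w : Fin m → ZMod 2 => wt w = t with hW
  set d : Fin m → ZMod 2 := fun a => if a = s ∨ a = s' then 1 else 0 with hd
  have hdsplit : d = (fun a => if a = s then (1 : ZMod 2) else 0)
      + (fun a => if a = s' then (1 : ZMod 2) else 0) := by
    funext a
    show (if a = s ∨ a = s' then (1 : ZMod 2) else 0)
      = (if a = s then (1 : ZMod 2) else 0) + (if a = s' then (1 : ZMod 2) else 0)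
    by_cases h1 : a = s
    · rw [if_pos (Or.inl h1), if_pos h1, if_neg (fun h => hss (h1.symm.trans h)), add_zero]
    · by_cases h2 : a = s'
      · rw [if_pos (Or.inr h2), if_neg h1, if_pos h2, zero_add]
      · rw [if_neg (fun h => h.elim h1 h2), if_neg h1, if_neg h2, add_zero]
  have hchid : chi y d = -1 := by
    rw [hdsplit, chi_add, chi_single, chi_single, hs, hs', ee_one, ee_zero]
    ring
  have hds : d s = 1 := by
    show (if s = s ∨ s = s' then (1 : ZMod 2) else 0) = 1
    exact if_pos (Or.inl rfl)
  have hds' : d s' = 1 := by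
    show (if s' = s ∨ s' = s' then (1 : ZMod 2) else 0) = 1
    exact if_pos (Or.inr rfl)
  have hdo : ∀ a, a ≠ s → a ≠ s' → d a = 0 := by
    intro a h1 h2
    show (if a = s ∨ a = s' then (1 : ZMod 2) else 0) = 0
    exact if_neg (fun h => h.elim h1 h2)
  have hswap : ∀ v : Fin m → ZMod 2, v s ≠ v s' → v + d = v ∘ (Equiv.swap s s') := by
    intro v hv
    funext a
    show v a + d a = v (Equiv.swap s s' a)
    by_cases h1 : a = s
    · rw [h1, hds, Equiv.swap_apply_left]
      exact zmod2_ne_add_one hv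
    · by_cases h2 : a = s'
      · rw [h2, hds', Equiv.swap_apply_right]
        exact zmod2_ne_add_one (Ne.symm hv)
      · rw [hdo a h1 h2, Equiv.swap_apply_of_ne_of_ne h1 h2, add_zero]
  -- sum over the unequal part vanishes
  have hne_zero : ∑ v ∈ W.filter (fun v => ¬ v s = v s'), chi y v = 0 := by
    apply Finset.sum_involution (fun v _ => v + d)
    · intro v hv
      rw [chi_add, hchid]
      ring
    · intro v _ _
      intro h
      have := congrFun h s
      simp only [Pi.add_apply, hds] at this
      have h2 : ∀ u : ZMod 2, u + 1 ≠ u := by decide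
      exact h2 (v s) this
    · intro v hv
      simp only [Finset.mem_filter, hW, Finset.mem_univ, true_and] at hv ⊢
      obtain ⟨hw, hvv⟩ := hv
      constructor
      · rw [hswap v hvv, wt_comp]
        exact hw
      · simp only [Pi.add_apply, hds, hds']
        intro h
        apply hvv
        have h3 : ∀ u w : ZMod 2, u + 1 = w + 1 → u = w := by decide
        exact h3 _ _ h
    · intro v _
      funext a
      simp only [Pi.add_apply]
      rw [add_assoc, zmod2_add_self, add_zero]
  have hsplit := Finset.sum_filter_add_sum_filter_not W (fun v => v s = v s') (chi y)
  have habs : |∑ w ∈ W, chi y w| ≤ ((W.filter fun v => v s = v s').card : ℝ) := by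
    rw [← hsplit, hne_zero, add_zero]
    calc |∑ v ∈ W.filter (fun v => v s = v s'), chi y v|
        ≤ ∑ v ∈ W.filter (fun v => v s = v s'), |chi y v| := Finset.abs_sum_le_sum_abs _ _
      _ ≤ ∑ v ∈ W.filter (fun v => v s = v s'), 1 :=
          Finset.sum_le_sum fun v _ => abs_chi_le y v
      _ = ((W.filter fun v => v s = v s').card : ℝ) := by rw [Finset.sum_const]; simp
  -- count the unequal part
  have hcount : (W.filter fun v => ¬ v s = v s').card = 2 * ((m - 2).choose (t - 1)) := by
    have e1 : W.filter (fun v => ¬ v s = v s')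
        = (Finset.univ.filter fun v : Fin m → ZMod 2 => wt v = t ∧ v s = 1 ∧ v s' = 0)
          ∪ (Finset.univ.filter fun v : Fin m → ZMod 2 => wt v = t ∧ v s' = 1 ∧ v s = 0) := by
      ext v
      simp only [Finset.mem_union, Finset.mem_filter, Finset.mem_univ, true_and, hW]
      have h4 := (by decide : ∀ u w : ZMod 2, ¬ u = w ↔ (u = 1 ∧ w = 0) ∨ (w = 1 ∧ u = 0))
      rw [h4 (v s) (v s')]
      tauto
    rw [e1, Finset.card_union_of_disjoint]
    · rw [card_pair t ht hss, card_pair t ht (Ne.symm hss)]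
      ring
    · rw [Finset.disjoint_left]
      rintro v h1 h2
      simp only [Finset.mem_filter, Finset.mem_univ, true_and] at h1 h2
      rw [h1.2.1] at h2
      exact one_ne_zero h2.2.2
  have hcards : (W.filter fun v => v s = v s').card
      + (W.filter fun v => ¬ v s = v s').card = m.choose t := by
    rw [Finset.card_filter_add_card_filter_not, hW, cardW]
  -- numeric finish
  have hm0 : (0:ℝ) < m := by
    have : 0 < m := lt_trans ht htm
    exact_mod_cast this
  have hNC : (m.choose t : ℝ) ≤ (m : ℝ) * ((m - 2).choose (t - 1) : ℝ) := by
    exact_mod_cast choose_ineq ht htm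
  have hcardeq : ((W.filter fun v => v s = v s').card : ℝ)
      = (m.choose t : ℝ) - 2 * ((m - 2).choose (t - 1) : ℝ) := by
    have h := hcards
    rw [hcount] at h
    have h2 : ((W.filter fun v => v s = v s').card : ℝ)
        + 2 * ((m - 2).choose (t - 1) : ℝ) = (m.choose t : ℝ) := by
      exact_mod_cast congrArg (Nat.cast : ℕ → ℝ) h
    linarith
  calc |∑ w ∈ W, chi y w| ≤ ((W.filter fun v => v s = v s').card : ℝ) := habs
    _ = (m.choose t : ℝ) - 2 * ((m - 2).choose (t - 1) : ℝ) := hcardeq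
    _ ≤ (1 - 2 / m) * (m.choose t : ℝ) := by
        rw [sub_mul, one_mul]
        have h1 : 2 / (m : ℝ) * (m.choose t : ℝ) ≤ 2 * ((m - 2).choose (t - 1) : ℝ) := by
          rw [div_mul_eq_mul_div, div_le_iff₀ hm0]
          nlinarith
        linarith

end Stmt16

open Stmt16

/-- let `Xₙ` be the sum in `𝔽₂^m` of `n` i.i.d. uniform vectors of
Hamming weight `t` (`0 < t < m`), and `Zₙ` uniform on the vectors of `𝔽₂^m` whose
Hamming weight has the same parity as `nt`. Then the total variation distance between
`Xₙ` and `Zₙ` is at most `C e^{-2n/m + m}` for an absolute constant `C`. -/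
theorem stmt_16 : ∃ C : ℝ, 0 < C ∧ ∀ m t n : ℕ, 0 < t → t < m →
    (1 / 2 : ℝ) * ∑ x : Fin m → ZMod 2,
      |(Nat.card {v : Fin n → Fin m → ZMod 2 //
            (∀ i, (Finset.univ.filter fun a => v i a = 1).card = t) ∧
              (∑ i, v i) = x} : ℝ) / (Nat.choose m t : ℝ) ^ n -
        (if (Finset.univ.filter fun a => x a = 1).card % 2 = (n * t) % 2 then
          (1 : ℝ) / (Nat.card {y : Fin m → ZMod 2 //
            (Finset.univ.filter fun a => y a = 1).card % 2 = (n * t) % 2} : ℝ)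
        else 0)| ≤
    C * Real.exp (-2 * (n : ℝ) / m + m) := by
  refine ⟨1, one_pos, ?_⟩
  intro m t n ht htm
  have hm1 : 0 < m := lt_trans ht htm
  have hm2 : 2 ≤ m := by omega
  have hm0 : (0:ℝ) < m := by exact_mod_cast hm1
  have hm2r : (2:ℝ) ≤ m := by exact_mod_cast hm2
  have hNpos : (0:ℝ) < (m.choose t : ℝ) := by
    exact_mod_cast Nat.choose_pos (le_of_lt htm)
  set M : ℕ := (Finset.univ.filter fun x : Fin m → ZMod 2 => wt x % 2 = (n*t) % 2).card with hM
  have hMr : (M:ℝ) = 2^(m-1) := card_parity (n*t) hm1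
  have hMpos : (0:ℝ) < M := by rw [hMr]; positivity
  -- identify the Nat.cards
  have hc1 : ∀ x : Fin m → ZMod 2, (Nat.card {v : Fin n → Fin m → ZMod 2 //
      (∀ i, (Finset.univ.filter fun a => v i a = 1).card = t) ∧ (∑ i, v i) = x})
      = (Finset.univ.filter fun v : Fin n → Fin m → ZMod 2 =>
          (∀ i, wt (v i) = t) ∧ ∑ i, v i = x).card := by
    intro x
    rw [Nat.card_eq_fintype_card]
    exact Fintype.card_subtype _
  have hc2 : (Nat.card {y : Fin m → ZMod 2 //
      (Finset.univ.filter fun a => y a = 1).card % 2 = (n * t) % 2}) = M := by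
    rw [Nat.card_eq_fintype_card]
    exact Fintype.card_subtype _
  set f : (Fin m → ZMod 2) → ℝ := fun x =>
    ((Finset.univ.filter fun v : Fin n → Fin m → ZMod 2 =>
        (∀ i, wt (v i) = t) ∧ ∑ i, v i = x).card : ℝ) / (m.choose t : ℝ)^n
      - (if wt x % 2 = (n*t) % 2 then 1/(M:ℝ) else 0) with hf
  have hgoal : (∑ x : Fin m → ZMod 2,
      |(Nat.card {v : Fin n → Fin m → ZMod 2 //
            (∀ i, (Finset.univ.filter fun a => v i a = 1).card = t) ∧
              (∑ i, v i) = x} : ℝ) / (Nat.choose m t : ℝ) ^ n -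
        (if (Finset.univ.filter fun a => x a = 1).card % 2 = (n * t) % 2 then
          (1 : ℝ) / (Nat.card {y : Fin m → ZMod 2 //
            (Finset.univ.filter fun a => y a = 1).card % 2 = (n * t) % 2} : ℝ)
        else 0)|) = ∑ x : Fin m → ZMod 2, |f x| := by
    refine Finset.sum_congr rfl fun x _ => ?_
    rw [hc1 x, hc2, hf]
    rw [one_div]
    rfl
  rw [hgoal, one_mul]
  -- Fourier coefficients
  set B : ℝ := (1 - 2/(m:ℝ))^n with hB
  have hbase : (0:ℝ) ≤ 1 - 2/(m:ℝ) := by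
    have : 2/(m:ℝ) ≤ 1 := by
      rw [div_le_one hm0]
      exact hm2r
    linarith
  have hB0 : 0 ≤ B := pow_nonneg hbase n
  have hsub : ∀ y : Fin m → ZMod 2, ∑ x : Fin m → ZMod 2, f x * chi y x
      = (∑ x : Fin m → ZMod 2, ((Finset.univ.filter fun v : Fin n → Fin m → ZMod 2 =>
            (∀ i, wt (v i) = t) ∧ ∑ i, v i = x).card : ℝ) * chi y x) / (m.choose t : ℝ)^n
        - (1/(M:ℝ)) * ∑ x : Fin m → ZMod 2,
            (if wt x % 2 = (n*t) % 2 then (1:ℝ) else 0) * chi y x := by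
    intro y
    rw [Finset.sum_div, Finset.mul_sum, ← Finset.sum_sub_distrib]
    refine Finset.sum_congr rfl fun x _ => ?_
    simp only [hf]
    by_cases h : wt x % 2 = (n*t) % 2
    · rw [if_pos h, if_pos h]
      ring
    · rw [if_neg h, if_neg h]
      ring
  have hfhat : ∀ y : Fin m → ZMod 2, |∑ x : Fin m → ZMod 2, f x * chi y x| ≤ B := by
    intro y
    rw [hsub y, phat t n y, parity_sum (n*t) y]
    by_cases hy0 : y = 0
    · subst hy0
      have hF0 : (∑ w ∈ Finset.univ.filter fun w : Fin m → ZMod 2 => wt w = t,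
          chi (0 : Fin m → ZMod 2) w) = (m.choose t : ℝ) := by
        simp_rw [chi_zero_left]
        rw [Finset.sum_const, cardW t, nsmul_eq_mul, mul_one]
      have hifz : (if ((fun _ => 1 : Fin m → ZMod 2) + 0) = 0 then (2:ℝ)^m else 0) = 0 :=
        if_neg (by rw [add_zero]; exact ones_ne_zero hm1)
      rw [hF0, if_pos rfl, hifz, mul_zero, add_zero]
      have h2 : (2:ℝ)^m = 2^(m-1) * 2 := by
        have hm' : m - 1 + 1 = m := Nat.succ_pred_eq_of_pos hm1
        have hps := pow_succ (2:ℝ) (m-1)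
        rw [hm'] at hps
        exact hps
      have h9 : (m.choose t : ℝ)^n / (m.choose t : ℝ)^n - 1/(M:ℝ) * ((2:ℝ)^m / 2) = 0 := by
        rw [div_self (ne_of_gt (pow_pos hNpos n)), hMr, h2]
        field_simp
        exact sub_self 1
      rw [h9, abs_zero]
      exact hB0
    · by_cases hy1 : y = fun _ => 1
      · subst hy1
        have hF1 : (∑ w ∈ Finset.univ.filter fun w : Fin m → ZMod 2 => wt w = t,
            chi (fun _ => 1 : Fin m → ZMod 2) w) = (-1:ℝ)^t * (m.choose t : ℝ) := by
          have hcongr : ∀ w ∈ Finset.univ.filter fun w : Fin m → ZMod 2 => wt w = t,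
              chi (fun _ => 1 : Fin m → ZMod 2) w = (-1:ℝ)^t := by
            intro w hw
            rw [chi_ones w, (Finset.mem_filter.1 hw).2]
          rw [Finset.sum_congr rfl hcongr, Finset.sum_const, cardW t, nsmul_eq_mul]
          ring
        have hii : ((fun _ => 1 : Fin m → ZMod 2) + fun _ => 1) = 0 := by
          funext a
          show (1 : ZMod 2) + 1 = 0
          decide
        have hif1 : (if (fun _ => 1 : Fin m → ZMod 2) = 0 then (2:ℝ)^m else 0) = 0 :=
          if_neg (ones_ne_zero hm1)
        have hif2 : (if ((fun _ => 1 : Fin m → ZMod 2) + fun _ => 1) = 0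
            then (2:ℝ)^m else 0) = 2^m := if_pos hii
        rw [hF1, hif1, hif2, zero_add]
        have h2 : (2:ℝ)^m = 2^(m-1) * 2 := by
          have hm' : m - 1 + 1 = m := Nat.succ_pred_eq_of_pos hm1
          have hps := pow_succ (2:ℝ) (m-1)
          rw [hm'] at hps
          exact hps
        have e1 : ((-1:ℝ)^t * (m.choose t : ℝ))^n / (m.choose t : ℝ)^n = (-1:ℝ)^(n*t) := by
          rw [mul_pow, mul_div_assoc, div_self (ne_of_gt (pow_pos hNpos n)), mul_one,
            ← pow_mul, mul_comm t n]
        have e2 : (1/(M:ℝ)) * ((-1:ℝ)^(n*t) * (2:ℝ)^m / 2) = (-1:ℝ)^(n*t) := by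
          rw [hMr, h2]
          have hpow : ((2:ℝ)^(m-1)) ≠ 0 := by positivity
          field_simp
        rw [e1, e2, sub_self, abs_zero]
        exact hB0
      · have hplus : ¬ ((fun _ => 1 : Fin m → ZMod 2) + y = 0) := by
          intro h
          apply hy1
          funext a
          have := congrFun h a
          have h3 : ∀ u : ZMod 2, 1 + u = 0 → u = 1 := by decide
          exact h3 (y a) this
        rw [if_neg hy0, if_neg hplus, mul_zero, add_zero, zero_div, mul_zero, sub_zero]
        have hFb := F_bound ht htm hy0 hy1
        rw [abs_div, abs_pow, abs_of_pos (pow_pos hNpos n), ← div_pow]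
        have h2 : |∑ w ∈ Finset.univ.filter fun w : Fin m → ZMod 2 => wt w = t, chi y w|
            / (m.choose t : ℝ) ≤ 1 - 2/(m:ℝ) := by
          rw [div_le_iff₀ hNpos]
          exact hFb
        exact pow_le_pow_left₀ (by positivity) h2 n
  -- Parseval and Cauchy–Schwarz
  have hcardG : ((Finset.univ : Finset (Fin m → ZMod 2)).card : ℝ) = 2^m := by
    rw [Finset.card_univ]
    have : Fintype.card (Fin m → ZMod 2) = 2^m := by
      rw [Fintype.card_fun, ZMod.card 2, Fintype.card_fin]
    rw [this]
    push_cast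
    ring
  have hpars := parseval f
  have hsumy : ∑ y : Fin m → ZMod 2, (∑ x : Fin m → ZMod 2, f x * chi y x)^2
      ≤ 2^m * B^2 := by
    calc ∑ y : Fin m → ZMod 2, (∑ x : Fin m → ZMod 2, f x * chi y x)^2
        ≤ ∑ _y : Fin m → ZMod 2, B^2 := by
          refine Finset.sum_le_sum fun y _ => ?_
          rw [← sq_abs]
          exact pow_le_pow_left₀ (abs_nonneg _) (hfhat y) 2
      _ = 2^m * B^2 := by
          rw [Finset.sum_const, nsmul_eq_mul, hcardG]
  have hsumsq : ∑ x : Fin m → ZMod 2, (f x)^2 ≤ B^2 := by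
    have h2m : (0:ℝ) < 2^m := by positivity
    rw [hpars] at hsumy
    exact le_of_mul_le_mul_left hsumy h2m
  have hCS : (∑ x : Fin m → ZMod 2, |f x|)^2 ≤ 2^m * ∑ x : Fin m → ZMod 2, (f x)^2 := by
    have h := Finset.sum_mul_sq_le_sq_mul_sq Finset.univ (fun x => |f x|) (fun _ => (1:ℝ))
    simp only [mul_one, one_pow, sq_abs] at h
    rw [Finset.sum_const, nsmul_eq_mul, mul_one] at h
    calc (∑ x : Fin m → ZMod 2, |f x|)^2
        ≤ (∑ x : Fin m → ZMod 2, (f x)^2) * ((Finset.univ : Finset (Fin m → ZMod 2)).card : ℝ) := h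
      _ = 2^m * ∑ x : Fin m → ZMod 2, (f x)^2 := by rw [hcardG]; ring
  have hS0 : 0 ≤ ∑ x : Fin m → ZMod 2, |f x| :=
    Finset.sum_nonneg fun x _ => abs_nonneg _
  have hSsq : (∑ x : Fin m → ZMod 2, |f x|)^2 ≤ 2^m * B^2 := by
    calc (∑ x : Fin m → ZMod 2, |f x|)^2 ≤ 2^m * ∑ x : Fin m → ZMod 2, (f x)^2 := hCS
      _ ≤ 2^m * B^2 := by
          apply mul_le_mul_of_nonneg_left hsumsq (by positivity)
  -- numeric estimates
  have hexp1 : B ≤ Real.exp (-2*(n:ℝ)/m) := by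
    have h1 : 1 - 2/(m:ℝ) ≤ Real.exp (-(2/(m:ℝ))) := by
      have := Real.add_one_le_exp (-(2/(m:ℝ)))
      linarith
    calc B ≤ (Real.exp (-(2/(m:ℝ))))^n := pow_le_pow_left₀ hbase h1 n
      _ = Real.exp (-2*(n:ℝ)/m) := by
          rw [← Real.exp_nat_mul]
          congr 1
          ring
  have h2m : (2:ℝ)^m ≤ (Real.exp (m:ℝ))^2 := by
    have h2e : (2:ℝ) ≤ Real.exp 1 := by
      have := Real.add_one_le_exp (1:ℝ)
      linarith
    have hem : (1:ℝ) ≤ Real.exp (m:ℝ) := Real.one_le_exp (by positivity)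
    calc (2:ℝ)^m ≤ (Real.exp 1)^m := pow_le_pow_left₀ (by norm_num) h2e m
      _ = Real.exp (m:ℝ) := by rw [← Real.exp_nat_mul, mul_one]
      _ ≤ (Real.exp (m:ℝ))^2 := by nlinarith [Real.exp_pos (m:ℝ)]
  have hfinal : (∑ x : Fin m → ZMod 2, |f x|)^2 ≤ (2 * Real.exp (-2*(n:ℝ)/m + m))^2 := by
    calc (∑ x : Fin m → ZMod 2, |f x|)^2 ≤ 2^m * B^2 := hSsq
      _ ≤ (Real.exp (m:ℝ))^2 * (Real.exp (-2*(n:ℝ)/m))^2 := by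
          apply mul_le_mul h2m (pow_le_pow_left₀ hB0 hexp1 2) (by positivity) (by positivity)
      _ = (Real.exp (-2*(n:ℝ)/m + m))^2 := by
          rw [← mul_pow, ← Real.exp_add]
          congr 2
          ring
      _ ≤ (2 * Real.exp (-2*(n:ℝ)/m + m))^2 := by
          nlinarith [Real.exp_pos (-2*(n:ℝ)/m + m)]
  have hSle : ∑ x : Fin m → ZMod 2, |f x| ≤ 2 * Real.exp (-2*(n:ℝ)/m + m) := by
    have h := Real.sqrt_le_sqrt hfinal
    rwa [Real.sqrt_sq hS0, Real.sqrt_sq (by positivity)] at h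
  linarith
end

section
/- Let X be a uniformly random unit vector on the sphere S^{m−1} ⊆ ℝ^m (m ≥ 2) and let X₁ be its first coordinate. For any δ ≥ c√m (for a suitable absolute constant c), Pr[|δ X₁| > 1/2] ≥ (1/2)·e^{−(m−3)/(2δ²)}. -/
open MeasureTheory

lemma aux_integrableOn_g :
    IntegrableOn (fun x : ℝ => (1 - x ^ 2) ^ (-(1/2) : ℝ)) (Set.Ioo (-1 : ℝ) 1) := by
  have h1 : IntervalIntegrable (fun x : ℝ => x ^ (-(1/2) : ℝ)) volume 0 2 :=
    intervalIntegral.intervalIntegrable_rpow' (by norm_num)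
  have h2 : IntervalIntegrable (fun x : ℝ => (1 - x) ^ (-(1/2) : ℝ)) volume (-1) 1 := by
    have := (h1.comp_sub_left 1).symm
    norm_num at this
    simpa using this
  have h3 : IntervalIntegrable (fun x : ℝ => (1 + x) ^ (-(1/2) : ℝ)) volume (-1) 1 := by
    have := h1.comp_add_left 1
    norm_num at this
    simpa using this
  have hsum : IntegrableOn
      (fun x : ℝ => (1 - x) ^ (-(1/2) : ℝ) + (1 + x) ^ (-(1/2) : ℝ))
      (Set.Ioo (-1 : ℝ) 1) := by
    have := (h2.add h3).def'
    rw [Set.uIoc_of_le (by norm_num : (-1:ℝ) ≤ 1)] at this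
    exact this.mono_set Set.Ioo_subset_Ioc_self
  refine hsum.integrable.mono ?_ ?_
  · apply Measurable.aestronglyMeasurable
    fun_prop
  · rw [ae_restrict_iff' measurableSet_Ioo]
    filter_upwards with x hx
    obtain ⟨hx1, hx2⟩ := hx
    have hb1 : (0:ℝ) < 1 - x := by linarith
    have hb2 : (0:ℝ) < 1 + x := by linarith
    have hb : (0:ℝ) < 1 - x ^ 2 := by nlinarith
    have hg0 : (0:ℝ) ≤ (1 - x ^ 2) ^ (-(1/2) : ℝ) := Real.rpow_nonneg hb.le _
    have h10 : (0:ℝ) ≤ (1 - x) ^ (-(1/2) : ℝ) := Real.rpow_nonneg hb1.le _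
    have h20 : (0:ℝ) ≤ (1 + x) ^ (-(1/2) : ℝ) := Real.rpow_nonneg hb2.le _
    rw [Real.norm_of_nonneg hg0, Real.norm_of_nonneg (by positivity)]
    rcases le_or_gt 0 x with hx0 | hx0
    · have hle : (1 - x : ℝ) ≤ 1 - x ^ 2 := by nlinarith
      have := Real.rpow_le_rpow_of_nonpos hb1 hle (by norm_num : (-(1/2):ℝ) ≤ 0)
      linarith
    · have hle : (1 + x : ℝ) ≤ 1 - x ^ 2 := by nlinarith
      have := Real.rpow_le_rpow_of_nonpos hb2 hle (by norm_num : (-(1/2):ℝ) ≤ 0)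
      linarith

lemma aux_integrableOn (p : ℝ) (hp : -(1/2 : ℝ) ≤ p) :
    IntegrableOn (fun x : ℝ => (1 - x ^ 2) ^ p) (Set.Ioo (-1 : ℝ) 1) := by
  refine aux_integrableOn_g.integrable.mono ?_ ?_
  · apply Measurable.aestronglyMeasurable
    fun_prop
  · rw [ae_restrict_iff' measurableSet_Ioo]
    filter_upwards with x hx
    obtain ⟨hx1, hx2⟩ := hx
    have hb : (0:ℝ) < 1 - x ^ 2 := by nlinarith
    have hb1 : (1 - x ^ 2 : ℝ) ≤ 1 := by nlinarith
    rw [Real.norm_of_nonneg (Real.rpow_nonneg hb.le _),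
      Real.norm_of_nonneg (Real.rpow_nonneg hb.le _)]
    exact Real.rpow_le_rpow_of_exponent_ge hb hb1 hp

set_option maxHeartbeats 2000000 in
/-- let `X` be uniform on the unit sphere in `ℝ^m` (`m ≥ 2`), so that its
first coordinate `X₁` has density proportional to `(1-x²)^{(m-3)/2}` on `(-1,1)`.
There is an absolute constant `c > 0` such that for all `δ ≥ c√m`,
`Pr[|δ X₁| > 1/2] ≥ (1/2) e^{-(m-3)/(2δ²)}`. -/
theorem stmt_18 : ∃ c : ℝ, 0 < c ∧ ∀ m : ℕ, 2 ≤ m → ∀ δ : ℝ,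
    c * Real.sqrt m ≤ δ →
    (1 / 2 : ℝ) * Real.exp (-(((m : ℝ) - 3)) / (2 * δ ^ 2)) ≤
      (∫ x in {x : ℝ | 1 / 2 < |δ * x|} ∩ Set.Ioo (-1 : ℝ) 1,
          (1 - x ^ 2) ^ (((m : ℝ) - 3) / 2)) /
      (∫ x in Set.Ioo (-1 : ℝ) 1, (1 - x ^ 2) ^ (((m : ℝ) - 3) / 2)) := by
  refine ⟨8, by norm_num, ?_⟩
  intro m hm δ hδ
  set p : ℝ := ((m : ℝ) - 3) / 2 with hp_def
  have hm2 : (2:ℝ) ≤ (m:ℝ) := by exact_mod_cast hm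
  have hp : -(1/2 : ℝ) ≤ p := by rw [hp_def]; linarith
  have hsm1 : (1:ℝ) ≤ Real.sqrt m := by
    rw [show (1:ℝ) = Real.sqrt 1 by simp]
    exact Real.sqrt_le_sqrt (by linarith)
  have hsmpos : (0:ℝ) < Real.sqrt m := by linarith
  have hδ8 : (8:ℝ) ≤ δ := by nlinarith
  have hδpos : (0:ℝ) < δ := by linarith
  have hδsq : 64 * (m:ℝ) ≤ δ ^ 2 := by
    have h1 : (8 * Real.sqrt m) ^ 2 ≤ δ ^ 2 := by
      apply pow_le_pow_left₀ (by positivity) hδ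
    have h2 : (8 * Real.sqrt m) ^ 2 = 64 * (m:ℝ) := by
      rw [mul_pow, Real.sq_sqrt (by linarith : (0:ℝ) ≤ (m:ℝ))]; norm_num
    linarith
  set a : ℝ := 1 / (2 * δ) with ha_def
  have hapos : 0 < a := by positivity
  have ha16 : a ≤ 1 / 16 := by
    rw [ha_def]
    rw [div_le_div_iff₀ (by linarith) (by norm_num)]
    linarith
  -- set equality
  have hset : {x : ℝ | 1 / 2 < |δ * x|} ∩ Set.Ioo (-1 : ℝ) 1
      = Set.Ioo (-1 : ℝ) 1 \ Set.Icc (-a) a := by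
    ext x
    simp only [Set.mem_inter_iff, Set.mem_setOf_eq, Set.mem_diff, Set.mem_Icc, Set.mem_Ioo]
    have hab : δ * a = 1 / 2 := by rw [ha_def]; field_simp
    constructor
    · rintro ⟨h1, h2⟩
      refine ⟨h2, fun hc => ?_⟩
      rw [abs_mul, abs_of_pos hδpos] at h1
      have habs : |x| ≤ a := abs_le.mpr hc
      nlinarith [mul_le_mul_of_nonneg_left habs hδpos.le]
    · rintro ⟨h2, h1⟩
      refine ⟨?_, h2⟩
      rw [abs_mul, abs_of_pos hδpos]
      by_contra hc
      push_neg at hc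
      exact h1 (abs_le.mp (by nlinarith [abs_nonneg x]))
  rw [hset]
  have hInt : IntegrableOn (fun x : ℝ => (1 - x ^ 2) ^ p) (Set.Ioo (-1:ℝ) 1) :=
    aux_integrableOn p hp
  have hsub : Set.Icc (-a) a ⊆ Set.Ioo (-1:ℝ) 1 := by
    intro x hx
    obtain ⟨h1, h2⟩ := hx
    constructor <;> [linarith [ha16, hapos]; linarith [ha16, hapos]]
  have hdiff : (∫ x in Set.Ioo (-1:ℝ) 1 \ Set.Icc (-a) a, (1 - x ^ 2) ^ p)
      = (∫ x in Set.Ioo (-1:ℝ) 1, (1 - x ^ 2) ^ p)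
        - ∫ x in Set.Icc (-a) a, (1 - x ^ 2) ^ p :=
    integral_diff measurableSet_Icc hInt hsub
  -- bound on the middle integral
  have hMI : (∫ x in Set.Icc (-a) a, (1 - x ^ 2) ^ p) ≤ 2 / δ := by
    have hbound : ∀ x ∈ Set.Icc (-a) a, ‖(1 - x ^ 2) ^ p‖ ≤ 2 := by
      intro x hx
      obtain ⟨h1, h2⟩ := hx
      have hx2 : x ^ 2 ≤ (1/16:ℝ)^2 := by nlinarith
      have hb0 : (1/2:ℝ) ≤ 1 - x ^ 2 := by nlinarith
      have hbpos : (0:ℝ) < 1 - x ^ 2 := by linarith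
      have hb1 : (1 - x ^ 2 : ℝ) ≤ 1 := by nlinarith
      rw [Real.norm_of_nonneg (Real.rpow_nonneg hbpos.le _)]
      calc (1 - x ^ 2) ^ p ≤ (1 - x ^ 2) ^ (-(1/2):ℝ) :=
            Real.rpow_le_rpow_of_exponent_ge hbpos hb1 hp
        _ ≤ ((1:ℝ)/2) ^ (-(1/2):ℝ) :=
            Real.rpow_le_rpow_of_nonpos (by norm_num) hb0 (by norm_num)
        _ ≤ 2 := by
            rw [Real.rpow_neg (by norm_num), ← Real.sqrt_eq_rpow]
            have hs2 : (1/2:ℝ) ≤ Real.sqrt (1/2) := by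
              have h4 := Real.sqrt_le_sqrt (show ((1:ℝ)/2)^2 ≤ 1/2 by norm_num)
              rwa [Real.sqrt_sq (by norm_num : (0:ℝ) ≤ 1/2)] at h4
            rw [inv_le_comm₀ (by positivity) (by norm_num)]
            linarith
    have := norm_setIntegral_le_of_norm_le_const
      (by rw [Real.volume_Icc]; exact ENNReal.ofReal_lt_top) hbound
    rw [Measure.real, Real.volume_Icc, ENNReal.toReal_ofReal (by linarith)] at this
    have h2 : (2:ℝ) * (a - -a) = 2 / δ := by rw [ha_def]; field_simp; ring
    calc (∫ x in Set.Icc (-a) a, (1 - x ^ 2) ^ p)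
        ≤ ‖∫ x in Set.Icc (-a) a, (1 - x ^ 2) ^ p‖ := le_abs_self _
      _ ≤ 2 * (a - -a) := this
      _ = 2 / δ := h2
  -- lower bound on the full integral
  have hD : 1 / Real.sqrt m ≤ ∫ x in Set.Ioo (-1:ℝ) 1, (1 - x ^ 2) ^ p := by
    obtain ⟨b, hb_def⟩ : ∃ b : ℝ, b = 1 / Real.sqrt m := ⟨_, rfl⟩
    have hbpos : 0 < b := by rw [hb_def]; positivity
    have hble : b ≤ 1 := by rw [hb_def, div_le_one hsmpos]; exact hsm1
    have hbsq : b ^ 2 = 1 / (m:ℝ) := by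
      rw [hb_def, div_pow, one_pow, Real.sq_sqrt (by linarith : (0:ℝ) ≤ (m:ℝ))]
    have hsub2 : Set.Ioo (-b) b ⊆ Set.Ioo (-1:ℝ) 1 := by
      intro x hx; exact ⟨by linarith [hx.1], by linarith [hx.2]⟩
    have hminv : 1 / (m:ℝ) ≤ 1/2 := by
      rw [div_le_div_iff₀ (by linarith) (by norm_num)]; linarith
    have hlow : ∀ x ∈ Set.Ioo (-b) b, (1/2:ℝ) ≤ (1 - x ^ 2) ^ p := by
      intro x hx
      obtain ⟨h1, h2⟩ := hx
      have hx2 : x ^ 2 < b ^ 2 := by nlinarith [abs_lt.mpr ⟨h1, h2⟩, sq_abs x]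
      have hbase : 1 - 1/(m:ℝ) ≤ 1 - x ^ 2 := by rw [← hbsq]; linarith
      have hbase0 : (0:ℝ) < 1 - 1/(m:ℝ) := by linarith
      have hbasex : (0:ℝ) < 1 - x ^ 2 := by linarith
      have hbase1 : (1 - x ^ 2 : ℝ) ≤ 1 := by nlinarith
      rcases le_or_gt 0 p with hp0 | hp0
      · have hkey : Real.exp (-(1/2)) ≤ (1 - 1/(m:ℝ)) ^ p := by
          rw [Real.rpow_def_of_pos hbase0]
          apply Real.exp_le_exp.mpr
          have hm1 : (0:ℝ) < (m:ℝ) - 1 := by linarith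
          have hlog : -(1/((m:ℝ)-1)) ≤ Real.log (1 - 1/(m:ℝ)) := by
            have hfrac : (0:ℝ) < (m:ℝ)/((m:ℝ)-1) := by positivity
            have h3 := Real.log_le_sub_one_of_pos hfrac
            have he : (1 - 1/(m:ℝ)) = ((m:ℝ)/((m:ℝ)-1))⁻¹ := by
              field_simp
            have he2 : (m:ℝ)/((m:ℝ)-1) - 1 = 1/((m:ℝ)-1) := by field_simp; ring
            rw [he, Real.log_inv]
            linarith
          have hmul := mul_le_mul_of_nonneg_right hlog hp0
          have hfin : p / ((m:ℝ)-1) ≤ 1/2 := by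
            rw [hp_def, div_le_div_iff₀ (by linarith) (by norm_num)]
            ring_nf
            nlinarith
          calc (-(1/2) : ℝ) ≤ -(p/((m:ℝ)-1)) := by linarith
            _ = -(1/((m:ℝ)-1)) * p := by ring
            _ ≤ Real.log (1 - 1/(m:ℝ)) * p := hmul
        have hmono : (1 - 1/(m:ℝ)) ^ p ≤ (1 - x ^ 2) ^ p :=
          Real.rpow_le_rpow hbase0.le hbase hp0
        have hexp : (1/2:ℝ) ≤ Real.exp (-(1/2)) := by
          have := Real.add_one_le_exp (-(1/2):ℝ)
          linarith
        linarith
      · have := Real.one_le_rpow_of_pos_of_le_one_of_nonpos hbasex hbase1 hp0.le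
        linarith
    have h1 : (1/2:ℝ) * (volume (Set.Ioo (-b) b)).toReal
        ≤ ∫ x in Set.Ioo (-b) b, (1 - x ^ 2) ^ p :=
      setIntegral_ge_of_const_le_real measurableSet_Ioo
        (by rw [Real.volume_Ioo]; exact ENNReal.ofReal_ne_top) hlow (hInt.mono_set hsub2)
    have hvol : (volume (Set.Ioo (-b) b)).toReal = 2 * b := by
      rw [Real.volume_Ioo, ENNReal.toReal_ofReal (by linarith)]; ring
    have h2 : (∫ x in Set.Ioo (-b) b, (1 - x ^ 2) ^ p)
        ≤ ∫ x in Set.Ioo (-1:ℝ) 1, (1 - x ^ 2) ^ p := by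
      apply setIntegral_mono_set hInt
      · filter_upwards [ae_restrict_mem measurableSet_Ioo] with x hx
        have : (0:ℝ) < 1 - x ^ 2 := by nlinarith [hx.1, hx.2]
        exact Real.rpow_nonneg this.le _
      · exact HasSubset.Subset.eventuallyLE hsub2
    rw [hvol] at h1
    calc (1:ℝ) / Real.sqrt m = (1/2) * (2 * b) := by rw [hb_def]; ring
      _ ≤ ∫ x in Set.Ioo (-b) b, (1 - x ^ 2) ^ p := h1
      _ ≤ _ := h2
  -- assemble
  have hDpos : 0 < ∫ x in Set.Ioo (-1:ℝ) 1, (1 - x ^ 2) ^ p := by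
    have : (0:ℝ) < 1 / Real.sqrt m := by positivity
    linarith
  rw [hdiff, le_div_iff₀ hDpos]
  set D := ∫ x in Set.Ioo (-1:ℝ) 1, (1 - x ^ 2) ^ p
  set MI := ∫ x in Set.Icc (-a) a, (1 - x ^ 2) ^ p
  have ht : (1/2:ℝ) * Real.exp (-((m:ℝ) - 3) / (2 * δ ^ 2)) ≤ 128/255 := by
    have harg : -((m:ℝ) - 3) / (2 * δ ^ 2) ≤ 1/256 := by
      rw [div_le_iff₀ (by positivity)]
      nlinarith
    have hexp : Real.exp (1/256 : ℝ) ≤ 256/255 := by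
      have h1 := Real.add_one_le_exp (-(1/256:ℝ))
      have h2 : Real.exp (1/256:ℝ) * Real.exp (-(1/256:ℝ)) = 1 := by
        rw [← Real.exp_add]; norm_num
      nlinarith [Real.exp_pos (-(1/256):ℝ)]
    have := Real.exp_le_exp.mpr harg
    linarith
  have ht0 : (0:ℝ) ≤ (1/2:ℝ) * Real.exp (-((m:ℝ) - 3) / (2 * δ ^ 2)) := by positivity
  have hMI2 : MI ≤ 1 / (4 * Real.sqrt m) := by
    have : (2:ℝ) / δ ≤ 1 / (4 * Real.sqrt m) := by
      rw [div_le_div_iff₀ hδpos (by positivity)]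
      linarith
    linarith
  have hx1 : (1/2:ℝ) * Real.exp (-((m:ℝ) - 3) / (2 * δ ^ 2)) * D ≤ (128/255) * D :=
    mul_le_mul_of_nonneg_right ht (by linarith [hD, hsmpos] : (0:ℝ) ≤ D)
  have hx2 : (127/255:ℝ) * (1 / Real.sqrt m) ≤ (127/255) * D :=
    mul_le_mul_of_nonneg_left hD (by norm_num)
  have hx3 : 1 / (4 * Real.sqrt m) ≤ (127/255:ℝ) * (1 / Real.sqrt m) := by
    rw [show (1:ℝ)/(4 * Real.sqrt m) = (1/4) * (1/Real.sqrt m) by rw [one_div, mul_inv]; ring]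
    apply mul_le_mul_of_nonneg_right (by norm_num) (by positivity)
  linarith
end

section
/- Let X be a random vector in ℝ^m taking finitely many values, with nonsingular covariance Σ = E[XX^†], supported on a lattice L with dual lattice L*. Suppose X is β-bounded, meaning the kernel of the matrix A whose columns are the support of X has an integral spanning set each of whose elements has ℓ₁ norm at most β. Then for every θ ∈ ℝ^m, either max over x in the support of X of |⟨x, θ⟩ mod 1| ≥ 1/β, or √(E[(⟨θ, X⟩ mod 1)²]) ≥ inf over l ∈ L* of √(E[⟨X, θ − l⟩²]). -/
open scoped BigOperators

theorem int_cast_eq_zero_of_abs_lt {z : ℤ} (h : |(z : ℝ)| < 1) : z = 0 := by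
  have h1 := abs_lt.mp h
  have h2 : (-1 : ℤ) < z := by exact_mod_cast h1.1
  have h3 : z < 1 := by exact_mod_cast h1.2
  omega

/-- let `X` be a finitely supported random vector in `ℝ^m` (values
`x i` taken with probabilities `p i > 0`), with nonsingular covariance
`Σ = E[X Xᵀ]`, supported on the lattice `Λ = span_ℤ (supp X)` with dual `Λ*`.
Suppose `X` is `β`-bounded: the kernel of the matrix `A` whose columns are the support
of `X` has an integral spanning set whose elements have ℓ₁ norm at most `β`. Then for
every `θ`, either `max_{x ∈ supp X} |⟨x, θ⟩ mod 1| ≥ 1/β`, or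
`√(E[(⟨θ, X⟩ mod 1)²]) ≥ inf_{l ∈ Λ*} √(E[⟨X, θ - l⟩²])`. -/
theorem stmt_19 (m : ℕ) {ι : Type*} [Fintype ι] (p : ι → ℝ) (x : ι → Fin m → ℝ)
    (hp : ∀ i, 0 < p i) (hpsum : ∑ i, p i = 1)
    (hcov : IsUnit (Matrix.det (Matrix.of fun a b : Fin m => ∑ i, p i * x i a * x i b)))
    (Λ : AddSubgroup (Fin m → ℝ)) (hΛ : Λ = AddSubgroup.closure (Set.range x))
    (β : ℝ) (hβ : 0 < β)
    (hbounded : ∃ B : Set (ι → ℝ),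
      (∀ b ∈ B, ∀ i, ∃ z : ℤ, b i = (z : ℝ)) ∧
      Submodule.span ℝ B = LinearMap.ker (Matrix.of fun a i => x i a).mulVecLin ∧
      ∀ b ∈ B, ∑ i, |b i| ≤ β)
    (θ : Fin m → ℝ) :
    (∃ i, 1 / β ≤ |(∑ a, x i a * θ a) - (round (∑ a, x i a * θ a) : ℤ)|) ∨
    sInf {r : ℝ | ∃ l : Fin m → ℝ,
        (∀ v ∈ Λ, ∃ k : ℤ, ∑ a, l a * v a = (k : ℝ)) ∧
        r = Real.sqrt (∑ i, p i * (∑ a, x i a * (θ a - l a)) ^ 2)} ≤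
      Real.sqrt (∑ i, p i *
        ((∑ a, x i a * θ a) - (round (∑ a, x i a * θ a) : ℤ)) ^ 2) := by
  classical
  by_cases hbig : ∃ i, 1 / β ≤ |(∑ a, x i a * θ a) - (round (∑ a, x i a * θ a) : ℤ)|
  · exact Or.inl hbig
  right
  push_neg at hbig
  obtain ⟨B, hBint, hBspan, hBl1⟩ := hbounded
  set k : ι → ℝ := fun i => ((round (∑ a, x i a * θ a) : ℤ) : ℝ) with hkdef
  set r : ι → ℝ := fun i => (∑ a, x i a * θ a) - k i with hrdef
  -- The linear map v ↦ (⟨x i, v⟩)_i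
  let T : (Fin m → ℝ) →ₗ[ℝ] (ι → ℝ) := (Matrix.of fun (i : ι) (a : Fin m) => x i a).mulVecLin
  have hTapp : ∀ (v : Fin m → ℝ) (i : ι), T v i = ∑ a, x i a * v a := by
    intro v i
    simp [T, Matrix.mulVecLin_apply, Matrix.mulVec, dotProduct]
  -- Key: the functional w ↦ ∑ i, w i * k i vanishes on ker A = span B
  have hGB : ∀ b ∈ B, ∑ i, b i * k i = 0 := by
    intro b hb
    have hker : (Matrix.of fun a i => x i a).mulVecLin b = 0 := by
      rw [← LinearMap.mem_ker, ← hBspan]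
      exact Submodule.subset_span hb
    have hker' : ∀ a : Fin m, ∑ i, x i a * b i = 0 := by
      intro a
      have := congrFun hker a
      simpa [Matrix.mulVecLin_apply, Matrix.mulVec, dotProduct] using this
    -- ∑ i, b i * ⟨x i, θ⟩ = 0
    have hsum0 : ∑ i, b i * (∑ a, x i a * θ a) = 0 := by
      calc ∑ i, b i * (∑ a, x i a * θ a)
          = ∑ i, ∑ a, b i * (x i a * θ a) := by simp [Finset.mul_sum]
        _ = ∑ a, ∑ i, b i * (x i a * θ a) := Finset.sum_comm
        _ = ∑ a, (∑ i, x i a * b i) * θ a := by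
            refine Finset.sum_congr rfl fun a _ => ?_
            rw [Finset.sum_mul]
            exact Finset.sum_congr rfl fun i _ => by ring
        _ = 0 := by simp [hker']
    -- hence ∑ b i * k i = - ∑ b i * r i
    have hsplit : ∑ i, b i * k i = - ∑ i, b i * r i := by
      have heq : ∑ i, (b i * k i + b i * r i) = ∑ i, b i * (∑ a, x i a * θ a) := by
        refine Finset.sum_congr rfl fun i _ => ?_
        simp only [hrdef]
        ring
      have h0 : ∑ i, b i * k i + ∑ i, b i * r i = 0 := by
        rw [← Finset.sum_add_distrib, heq, hsum0]
      linarith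
    -- ∑ b i * k i is an integer
    obtain ⟨z, hz⟩ : ∃ z : ℤ, ∑ i, b i * k i = (z : ℝ) := by
      have hint : ∀ i : ι, ∃ z : ℤ, b i * k i = (z : ℝ) := by
        intro i
        obtain ⟨zb, hzb⟩ := hBint b hb i
        refine ⟨zb * round (∑ a, x i a * θ a), ?_⟩
        rw [hzb]
        simp only [hkdef]
        push_cast
        ring
      choose zi hzi using hint
      refine ⟨∑ i, zi i, ?_⟩
      rw [Finset.sum_congr rfl fun i _ => hzi i]
      push_cast
      ring
    -- and it has absolute value < 1
    have habs : |∑ i, b i * k i| < 1 := by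
      rw [hsplit, abs_neg]
      by_cases hb0 : ∀ i, b i = 0
      · simp [hb0]
      push_neg at hb0
      obtain ⟨j, hj⟩ := hb0
      have hstrict : ∑ i, |b i| * |r i| < ∑ i, |b i| * (1 / β) := by
        refine Finset.sum_lt_sum (fun i _ => ?_) ⟨j, Finset.mem_univ j, ?_⟩
        · exact mul_le_mul_of_nonneg_left (le_of_lt (hbig i)) (abs_nonneg _)
        · exact mul_lt_mul_of_pos_left (hbig j) (abs_pos.mpr hj)
      calc |∑ i, b i * r i| ≤ ∑ i, |b i * r i| := Finset.abs_sum_le_sum_abs _ _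
        _ = ∑ i, |b i| * |r i| := by simp [abs_mul]
        _ < ∑ i, |b i| * (1 / β) := hstrict
        _ = (∑ i, |b i|) * (1 / β) := by rw [Finset.sum_mul]
        _ ≤ β * (1 / β) := by
            apply mul_le_mul_of_nonneg_right (hBl1 b hb)
            positivity
        _ = 1 := by rw [mul_one_div, div_self hβ.ne']
    rw [hz] at habs ⊢
    exact_mod_cast int_cast_eq_zero_of_abs_lt habs
  -- k is in the range of T
  have hk_mem : k ∈ LinearMap.range T := by
    rw [← Subspace.forall_mem_dualAnnihilator_apply_eq_zero_iff (LinearMap.range T) k]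
    intro φ hφ
    set b : ι → ℝ := fun i => φ (Pi.single i 1) with hbdef
    have hφeq : ∀ w : ι → ℝ, φ w = ∑ i, b i * w i := by
      intro w
      have hw : w = ∑ i, (w i) • (Pi.single i (1 : ℝ) : ι → ℝ) := by
        ext j
        simp [Pi.single_apply, Finset.sum_apply]
      conv_lhs => rw [hw]
      rw [map_sum]
      refine Finset.sum_congr rfl fun i _ => ?_
      rw [map_smul]
      simp [hbdef, mul_comm]
    -- b is in the kernel of A
    have hbker : b ∈ Submodule.span ℝ B := by
      rw [hBspan, LinearMap.mem_ker]
      funext a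
      have h1 : φ (T (Pi.single a 1)) = 0 := by
        rw [Submodule.mem_dualAnnihilator] at hφ
        exact hφ _ (LinearMap.mem_range_self T _)
      have h2 : T (Pi.single a 1) = fun i => x i a := by
        funext i
        rw [hTapp]
        simp [Pi.single_apply]
      rw [h2, hφeq] at h1
      simpa [Matrix.mulVecLin_apply, Matrix.mulVec, dotProduct, mul_comm] using h1
    -- the functional c ↦ ∑ i, c i * k i vanishes on span B
    let G : (ι → ℝ) →ₗ[ℝ] ℝ :=
      { toFun := fun c => ∑ i, c i * k i
        map_add' := by intro c d; simp [add_mul, Finset.sum_add_distrib]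
        map_smul' := by intro s c; simp [Finset.mul_sum, mul_assoc] }
    have hG0 : G b = 0 := by
      have hle : Submodule.span ℝ B ≤ LinearMap.ker G := by
        rw [Submodule.span_le]
        intro c hc
        exact hGB c hc
      exact hle hbker
    rw [hφeq]
    exact hG0
  obtain ⟨l, hl⟩ := hk_mem
  have hlk : ∀ i, ∑ a, x i a * l a = k i := by
    intro i
    rw [← hTapp l i, hl]
  -- l is in the dual lattice
  have hdual : ∀ v ∈ Λ, ∃ z : ℤ, ∑ a, l a * v a = (z : ℝ) := by
    rw [hΛ]
    intro v hv
    induction hv using AddSubgroup.closure_induction with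
    | mem v hv =>
        obtain ⟨i, rfl⟩ := hv
        refine ⟨round (∑ a, x i a * θ a), ?_⟩
        have hki := hlk i
        simp only [hkdef] at hki
        rw [← hki]
        exact Finset.sum_congr rfl fun a _ => mul_comm _ _
    | zero => exact ⟨0, by simp⟩
    | add v w _ _ hv hw =>
        obtain ⟨z1, hz1⟩ := hv
        obtain ⟨z2, hz2⟩ := hw
        refine ⟨z1 + z2, ?_⟩
        push_cast
        rw [← hz1, ← hz2, ← Finset.sum_add_distrib]
        refine Finset.sum_congr rfl fun a _ => ?_
        simp [mul_add]
    | neg v _ hv =>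
        obtain ⟨z, hz⟩ := hv
        refine ⟨-z, ?_⟩
        push_cast
        rw [← hz]
        simp [mul_neg]
  -- the candidate value equals the RHS
  have hval : Real.sqrt (∑ i, p i * (∑ a, x i a * (θ a - l a)) ^ 2) =
      Real.sqrt (∑ i, p i *
        ((∑ a, x i a * θ a) - (round (∑ a, x i a * θ a) : ℤ)) ^ 2) := by
    congr 1
    refine Finset.sum_congr rfl fun i _ => ?_
    congr 2
    have hsub : ∑ a, x i a * (θ a - l a) = (∑ a, x i a * θ a) - ∑ a, x i a * l a := by
      rw [← Finset.sum_sub_distrib]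
      exact Finset.sum_congr rfl fun a _ => by ring
    rw [hsub, hlk i]
  refine csInf_le ?_ ?_
  · exact ⟨0, fun y hy => by obtain ⟨l', _, rfl⟩ := hy; exact Real.sqrt_nonneg _⟩
  · exact ⟨l, hdual, hval.symm⟩
end
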